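/- arXiv:2412.07932 — 10 statements merged into one kernel-verified Lean document; each statement's English description precedes it below -/
import Mathlib

section
/- Suppose G is a subgroup of SL(2,ℂ) (a group of 2×2 complex matrices of determinant 1) that is unitary. Then every element g ∈ G has real trace, i.e., the imaginary part of tr(g) is 0. -/
open Matrix Complex

/-- A group of invertible 2×2 complex matrices (given as a set of matrices) is *unitary*
if it preserves some nondegenerate Hermitian form `H` under `g ↦ gᴴ H g`. -/
def IsUnitaryMatrixGroup (S : Set (Matrix (Fin 2) (Fin 2) ℂ)) : Prop :=
  ∃ H : Matrix (Fin 2) (Fin 2) ℂ, H.IsHermitian ∧ H.det ≠ 0 ∧ ∀ g ∈ S, gᴴ * H * g = H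

/-- Every element of a unitary subgroup of `SL(2,ℂ)` has real trace. -/
theorem trace_real_of_unitary (G : Subgroup (Matrix.SpecialLinearGroup (Fin 2) ℂ))
    (hG : IsUnitaryMatrixGroup {m : Matrix (Fin 2) (Fin 2) ℂ | ∃ g ∈ G, (g : Matrix (Fin 2) (Fin 2) ℂ) = m}) :
    ∀ g ∈ G, (Matrix.trace (g : Matrix (Fin 2) (Fin 2) ℂ)).im = 0 := by
  intro g hg
  obtain ⟨H, hHherm, hHdet, hfix⟩ := hG
  set A : Matrix (Fin 2) (Fin 2) ℂ := (g : Matrix (Fin 2) (Fin 2) ℂ) with hAdef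
  have h : Aᴴ * H * A = H := hfix A ⟨g, hg, rfl⟩
  have hAdet : A.det = 1 := g.2
  have hAunit : IsUnit A.det := by rw [hAdet]; exact isUnit_one
  have hHunit : IsUnit H.det := isUnit_iff_ne_zero.mpr hHdet
  -- Aᴴ * H = H * A⁻¹
  have h1 : Aᴴ * H = H * A⁻¹ := by
    calc Aᴴ * H = Aᴴ * H * (A * A⁻¹) := by rw [Matrix.mul_nonsing_inv A hAunit, mul_one]
    _ = (Aᴴ * H * A) * A⁻¹ := by simp only [Matrix.mul_assoc]
    _ = H * A⁻¹ := by rw [h]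
  -- trace Aᴴ = trace A⁻¹
  have h2 : (Aᴴ).trace = (A⁻¹).trace := by
    have h3 : Aᴴ = H * A⁻¹ * H⁻¹ := by
      calc Aᴴ = Aᴴ * (H * H⁻¹) := by rw [Matrix.mul_nonsing_inv H hHunit, mul_one]
      _ = (Aᴴ * H) * H⁻¹ := by simp only [Matrix.mul_assoc]
      _ = H * A⁻¹ * H⁻¹ := by rw [h1]
    rw [h3, Matrix.trace_mul_cycle,
      Matrix.nonsing_inv_mul H hHunit, Matrix.one_mul]
  -- trace A⁻¹ = trace A (for det = 1, 2×2)
  have h4 : (A⁻¹).trace = A.trace := by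
    rw [Matrix.inv_def, hAdet, Matrix.adjugate_fin_two]
    simp [Matrix.trace_fin_two]
    ring
  have h5 : (starRingEnd ℂ) A.trace = A.trace := by
    rw [← Complex.star_def, ← Matrix.trace_conjTranspose, h2, h4]
  exact (Complex.conj_eq_iff_im.mp h5)
end

section
/- Let G be a subgroup of SL(2,ℂ) and let H be a 2×2 Hermitian matrix with det H ≠ 0 that is indefinite (H has one positive and one negative eigenvalue), such that gᴴ H g = H for every g ∈ G. Then there exists an invertible 2×2 complex matrix T such that for every g ∈ G all entries of T⁻¹ g T are real; i.e., G is conjugate to a subgroup of SL(2,ℝ). -/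
/-!
Diagonalising `H` by a unitary matrix and then moving to a basis of isotropic vectors, the form
`H` becomes congruent to `c • J` with `c ≠ 0` and `J = !![0, 1; -1, 0]`, so after conjugating by
the congruence matrix every `M` coming from `G` satisfies `Mᴴ J M = J`. Every `2 × 2` matrix
satisfies `Mᵀ J M = det M • J`, so for `det M = 1` we get `Mᴴ J M = Mᵀ J M`, hence `Mᴴ = Mᵀ`:
all entries of `M` are real.
-/

open Matrix Complex

def J₂ (R : Type*) [Ring R] : Matrix (Fin 2) (Fin 2) R := !![0, 1; -1, 0]

section CommRing

variable {R : Type*} [CommRing R]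

theorem transpose_mul_J₂_mul (M : Matrix (Fin 2) (Fin 2) R) : Mᵀ * J₂ R * M = M.det • J₂ R := by
  ext i j
  fin_cases i <;> fin_cases j <;> simp [J₂, det_fin_two, mul_apply] <;> ring

theorem isUnit_J₂ : IsUnit (J₂ R) :=
  (isUnit_iff_isUnit_det _).2 (by simp [J₂, det_fin_two])

theorem conjTranspose_eq_transpose_of_conjTranspose_mul_J₂_mul [StarRing R]
    {M : Matrix (Fin 2) (Fin 2) R} (hM : M.det = 1) (h : Mᴴ * J₂ R * M = J₂ R) : Mᴴ = Mᵀ := by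
  have hunit : IsUnit M := (isUnit_iff_isUnit_det M).2 (hM ▸ isUnit_one)
  have : Mᴴ * J₂ R * M = Mᵀ * J₂ R * M := by rw [h, transpose_mul_J₂_mul, hM, one_smul]
  exact isUnit_J₂.mul_right_cancel (hunit.mul_right_cancel this)

end CommRing

theorem conj_preserves_conjTranspose_mul_mul {n R : Type*} [Fintype n] [DecidableEq n]
    [CommRing R] [StarRing R] {T g H : Matrix n n R} (hT : IsUnit T.det) (hg : gᴴ * H * g = H) :
    (T⁻¹ * g * T)ᴴ * (Tᴴ * H * T) * (T⁻¹ * g * T) = Tᴴ * H * T := by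
  have hTT : T * T⁻¹ = 1 := mul_nonsing_inv T hT
  have hTT' : T⁻¹ᴴ * Tᴴ = 1 := by rw [← conjTranspose_mul, hTT, conjTranspose_one]
  calc (T⁻¹ * g * T)ᴴ * (Tᴴ * H * T) * (T⁻¹ * g * T)
      = Tᴴ * (gᴴ * (T⁻¹ᴴ * Tᴴ) * H * (T * T⁻¹) * g) * T := by
        simp only [conjTranspose_mul, Matrix.mul_assoc]
    _ = Tᴴ * H * T := by rw [hTT, hTT', Matrix.mul_one, Matrix.mul_one, hg]

theorem im_eq_zero_of_conjTranspose_eq_transpose {n : Type*} {M : Matrix n n ℂ} (h : Mᴴ = Mᵀ)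
    (i j : n) : (M i j).im = 0 :=
  conj_eq_iff_im.1 (congrFun₂ h j i)

theorem exists_conjTranspose_mul_diagonal_mul_eq_smul_J₂ (d : Fin 2 → ℝ) (hd : d 0 * d 1 < 0) :
    ∃ T : Matrix (Fin 2) (Fin 2) ℂ, IsUnit T.det ∧
      ∃ c : ℂ, c ≠ 0 ∧ Tᴴ * diagonal (fun i ↦ (d i : ℂ)) * T = c • J₂ ℂ := by
  -- the columns `(p, d₀)` and `i (p, -d₀)` are isotropic for `diag(d₀, d₁)` since `p² = -d₀ d₁`
  set p := Real.sqrt (-(d 0 * d 1))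
  have hp : (p : ℂ) ^ 2 = -(d 0 * d 1) := by exact_mod_cast Real.sq_sqrt (by linarith)
  have hp0 : p ≠ 0 := (Real.sqrt_pos.2 (by linarith)).ne'
  have hd0 : d 0 ≠ 0 := left_ne_zero_of_mul (ne_of_lt hd)
  have hd1 : d 1 ≠ 0 := right_ne_zero_of_mul (ne_of_lt hd)
  refine ⟨!![(p : ℂ), p * I; d 0, -(d 0 * I)], ?_, -2 * I * d 0 ^ 2 * d 1, ?_, ?_⟩
  · rw [det_fin_two_of, show (p : ℂ) * -(d 0 * I) - p * I * d 0 = -2 * I * p * d 0 by ring]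
    simp [hp0, hd0]
  · simp [hd0, hd1]
  · ext i j
    fin_cases i <;> fin_cases j <;>
      simp only [J₂, mul_apply, conjTranspose_apply, Fin.sum_univ_two, diagonal_fin_two, of_apply,
        cons_val', cons_val_zero, cons_val_one, cons_val_fin_one, Matrix.smul_apply, smul_eq_mul,
        RCLike.star_def, map_mul, map_neg, conj_ofReal, conj_I, Fin.isValue, Fin.zero_eta,
        Fin.mk_one]
    · linear_combination (d 0 : ℂ) * hp
    · linear_combination (d 0 * I : ℂ) * hp
    · linear_combination (-d 0 * I : ℂ) * hp
    · linear_combination (d 0 : ℂ) * hp - (d 0 ^ 2 * d 1 + d 0 * p ^ 2 : ℂ) * I_sq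

theorem Matrix.IsHermitian.exists_conjTranspose_mul_mul_eq_smul_J₂ {H : Matrix (Fin 2) (Fin 2) ℂ}
    (hH : H.IsHermitian) (h : hH.eigenvalues 0 * hH.eigenvalues 1 < 0) :
    ∃ T : Matrix (Fin 2) (Fin 2) ℂ, IsUnit T.det ∧ ∃ c : ℂ, c ≠ 0 ∧ Tᴴ * H * T = c • J₂ ℂ := by
  obtain ⟨S, hS, c, hc, hSDS⟩ := exists_conjTranspose_mul_diagonal_mul_eq_smul_J₂ _ h
  set U : Matrix (Fin 2) (Fin 2) ℂ := ↑hH.eigenvectorUnitary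
  have hUHU : Uᴴ * H * U = diagonal (fun i ↦ (hH.eigenvalues i : ℂ)) := by
    have := hH.conjStarAlgAut_star_eigenvectorUnitary
    rwa [Unitary.conjStarAlgAut_star_apply] at this
  refine ⟨U * S, ?_, c, hc, ?_⟩
  · rw [det_mul]
    exact (UnitaryGroup.det_isUnit _).mul hS
  · rw [← hSDS, ← hUHU]
    simp only [conjTranspose_mul, Matrix.mul_assoc]

theorem mul_neg_of_exists_pos_of_exists_neg {f : Fin 2 → ℝ} (h : ∃ i j, 0 < f i ∧ f j < 0) :
    f 0 * f 1 < 0 := by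
  obtain ⟨i, j, hi, hj⟩ := h
  fin_cases i <;> fin_cases j <;> simp only [Fin.zero_eta, Fin.mk_one] at hi hj
  · linarith
  · exact mul_neg_of_pos_of_neg hi hj
  · exact mul_neg_of_neg_of_pos hj hi
  · linarith

theorem conj_to_SL2R_of_indefinite_general (G : Subgroup (Matrix.SpecialLinearGroup (Fin 2) ℂ))
    (H : Matrix (Fin 2) (Fin 2) ℂ) (hH : H.IsHermitian)
    (hind : ∃ i j : Fin 2, 0 < hH.eigenvalues i ∧ hH.eigenvalues j < 0)
    (hpres : ∀ g ∈ G, (g : Matrix (Fin 2) (Fin 2) ℂ)ᴴ * H * (g : Matrix (Fin 2) (Fin 2) ℂ) = H) :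
    ∃ T : Matrix (Fin 2) (Fin 2) ℂ, IsUnit T.det ∧
      ∀ g ∈ G, ∀ i j, ((T⁻¹ * (g : Matrix (Fin 2) (Fin 2) ℂ) * T) i j).im = 0 := by
  obtain ⟨T, hT, c, hc, hTHT⟩ :=
    hH.exists_conjTranspose_mul_mul_eq_smul_J₂ (mul_neg_of_exists_pos_of_exists_neg hind)
  refine ⟨T, hT, fun g hg ↦ ?_⟩
  set M := T⁻¹ * (g : Matrix (Fin 2) (Fin 2) ℂ) * T
  have hdetM : M.det = 1 := by rw [det_conj' ((isUnit_iff_isUnit_det T).2 hT), g.2]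
  have hM : Mᴴ * J₂ ℂ * M = J₂ ℂ := by
    have := conj_preserves_conjTranspose_mul_mul hT (hpres g hg)
    rw [hTHT, Matrix.mul_smul, Matrix.smul_mul] at this
    exact smul_right_injective _ hc this
  exact im_eq_zero_of_conjTranspose_eq_transpose
    (conjTranspose_eq_transpose_of_conjTranspose_mul_J₂_mul hdetM hM)

/-- A subgroup of `SL(2,ℂ)` preserving a nondegenerate *indefinite* Hermitian form (one
positive and one negative eigenvalue) is conjugate to a subgroup of `SL(2,ℝ)`. -/
theorem conj_to_SL2R_of_indefinite (G : Subgroup (Matrix.SpecialLinearGroup (Fin 2) ℂ))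
    (H : Matrix (Fin 2) (Fin 2) ℂ) (hH : H.IsHermitian) (hdet : H.det ≠ 0)
    (hind : ∃ i j : Fin 2, 0 < hH.eigenvalues i ∧ hH.eigenvalues j < 0)
    (hpres : ∀ g ∈ G, (g : Matrix (Fin 2) (Fin 2) ℂ)ᴴ * H * (g : Matrix (Fin 2) (Fin 2) ℂ) = H) :
    ∃ T : Matrix (Fin 2) (Fin 2) ℂ, IsUnit T.det ∧
      ∀ g ∈ G, ∀ i j, ((T⁻¹ * (g : Matrix (Fin 2) (Fin 2) ℂ) * T) i j).im = 0 :=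
  conj_to_SL2R_of_indefinite_general G H hH hind hpres
end

section
/- Let z_p, z_q ∈ ℂ satisfy z_p · conj(z_q) ∉ ℝ (its imaginary part is nonzero), and let P = !![1, z_p; 0, 1] and Q = !![1, z_q; 0, 1]. Then every element of the group generated by P and Q has trace 2 (in particular all traces are real), yet there is no 2×2 Hermitian matrix H with det H ≠ 0 such that Pᴴ H P = H and Qᴴ H Q = H; that is, the group generated by P and Q is not unitary, so real traces alone do not imply unitarity. -/
open Matrix Complex

/-- Real traces alone do not imply unitarity: two unipotent upper-triangular matrices
whose off-diagonal entries satisfy `z_p * conj z_q ∉ ℝ` generate a group all of whose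
elements have trace 2, yet no nondegenerate Hermitian form is preserved by both. -/
theorem real_traces_not_imply_unitary (zp zq : ℂ) (h : (zp * (starRingEnd ℂ) zq).im ≠ 0) :
    (∀ g ∈ Subgroup.closure
        ({⟨!![1, zp; 0, 1], by simp [Matrix.det_fin_two_of]⟩,
          ⟨!![1, zq; 0, 1], by simp [Matrix.det_fin_two_of]⟩} :
          Set (Matrix.SpecialLinearGroup (Fin 2) ℂ)),
      Matrix.trace (g : Matrix (Fin 2) (Fin 2) ℂ) = 2) ∧
    ¬ ∃ H : Matrix (Fin 2) (Fin 2) ℂ, H.IsHermitian ∧ H.det ≠ 0 ∧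
        (!![1, zp; 0, 1])ᴴ * H * !![1, zp; 0, 1] = H ∧
        (!![1, zq; 0, 1])ᴴ * H * !![1, zq; 0, 1] = H := by
  have hzp : zp ≠ 0 := by rintro rfl; simp at h
  have hzq : zq ≠ 0 := by rintro rfl; simp at h
  constructor
  · intro g hg
    have key : ∃ z : ℂ, (g : Matrix (Fin 2) (Fin 2) ℂ) = !![1, z; 0, 1] := by
      induction hg using Subgroup.closure_induction with
      | mem x hx =>
        rcases hx with hx | hx
        · exact ⟨zp, by rw [hx]⟩
        · exact ⟨zq, by rw [hx]⟩
      | one => exact ⟨0, by ext i j; fin_cases i <;> fin_cases j <;> simp⟩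
      | mul x y _ _ hx hy =>
        obtain ⟨a, ha⟩ := hx
        obtain ⟨b, hb⟩ := hy
        refine ⟨a + b, ?_⟩
        rw [Matrix.SpecialLinearGroup.coe_mul, ha, hb]
        ext i j; fin_cases i <;> fin_cases j <;>
          simp [Matrix.mul_apply, Fin.sum_univ_two] <;> ring
      | inv x _ hx =>
        obtain ⟨a, ha⟩ := hx
        refine ⟨-a, ?_⟩
        rw [Matrix.SpecialLinearGroup.coe_inv, ha, Matrix.adjugate_fin_two_of]
        norm_num
    obtain ⟨z, hz⟩ := key
    rw [hz, Matrix.trace_fin_two_of]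
    norm_num
  · rintro ⟨H, hHerm, hdet, hP, hQ⟩
    have hP01 := congrFun (congrFun hP 0) 1
    have hP11 := congrFun (congrFun hP 1) 1
    have hQ01 := congrFun (congrFun hQ 0) 1
    have hQ11 := congrFun (congrFun hQ 1) 1
    simp [Matrix.mul_apply, Fin.sum_univ_two, Matrix.conjTranspose_apply]
      at hP01 hP11 hQ01 hQ11
    have ha : H 0 0 = 0 := by
      rcases hP01 with h' | h'
      · exact h'
      · exact absurd h' hzp
    have hc : (starRingEnd ℂ) (H 0 1) = H 1 0 := hHerm.apply 1 0
    have e1 : zp * (starRingEnd ℂ) (H 0 1) + (starRingEnd ℂ) zp * H 0 1 = 0 := by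
      rw [hc]; linear_combination hP11 - (starRingEnd ℂ) zp * zp * ha
    have e2 : zq * (starRingEnd ℂ) (H 0 1) + (starRingEnd ℂ) zq * H 0 1 = 0 := by
      rw [hc]; linear_combination hQ11 - (starRingEnd ℂ) zq * zq * ha
    have hb : H 0 1 ≠ 0 := by
      intro hb0
      apply hdet
      rw [Matrix.det_fin_two, ha, hb0]
      ring
    have hbb : H 0 1 * (starRingEnd ℂ) (H 0 1) ≠ 0 :=
      mul_ne_zero hb (by simpa using hb)
    have key : (zp * (starRingEnd ℂ) zq) * (H 0 1 * (starRingEnd ℂ) (H 0 1)) =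
        ((starRingEnd ℂ) zp * zq) * (H 0 1 * (starRingEnd ℂ) (H 0 1)) := by
      linear_combination ((starRingEnd ℂ) zq * H 0 1) * e1 -
        ((starRingEnd ℂ) zp * H 0 1) * e2
    have : zp * (starRingEnd ℂ) zq = (starRingEnd ℂ) zp * zq :=
      mul_right_cancel₀ hbb key
    exact h (by rw [← Complex.conj_eq_iff_im, _root_.map_mul, Complex.conj_conj, ← this, mul_comm])
end

section
/- Fix matrices P, Q, R ∈ SL(2,ℂ), let G be the group generated by {P, Q, R}, and suppose the natural action of G on ℂ² is irreducible. Then G is unitary if and only if the seven traces tr(P), tr(Q), tr(R), tr(P·Q), tr(Q·R), tr(P·R), tr(P·Q·R) are all real. -/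
open Matrix Complex

/-- A subgroup of `SL(2,ℂ)`, viewed as a set of matrices, is *unitary* if it preserves some
nondegenerate Hermitian form `H` under `g ↦ gᴴ H g`. -/
def IsUnitarySubgroup (G : Subgroup (Matrix.SpecialLinearGroup (Fin 2) ℂ)) : Prop :=
  ∃ H : Matrix (Fin 2) (Fin 2) ℂ, H.IsHermitian ∧ H.det ≠ 0 ∧
    ∀ g ∈ G, (g : Matrix (Fin 2) (Fin 2) ℂ)ᴴ * H * (g : Matrix (Fin 2) (Fin 2) ℂ) = H

/-- The natural action of `G ⊆ SL(2,ℂ)` on `ℂ²` is irreducible if there is no nonzero common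
eigenvector. -/
def IsIrreducibleSubgroup (G : Subgroup (Matrix.SpecialLinearGroup (Fin 2) ℂ)) : Prop :=
  ¬ ∃ v : Fin 2 → ℂ, v ≠ 0 ∧ ∀ g ∈ G, ∃ c : ℂ, (g : Matrix (Fin 2) (Fin 2) ℂ) *ᵥ v = c • v

/-- The trace of an element of `SL(2,ℂ)`. -/
noncomputable def trSL (g : Matrix.SpecialLinearGroup (Fin 2) ℂ) : ℂ :=
  Matrix.trace (g : Matrix (Fin 2) (Fin 2) ℂ)

/-!
For `g ∈ SL(2,ℂ)` the trace of `g⁻¹ = adjugate g` equals that of `g`. Hence if `gᴴ H g = H`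
with `H` invertible, then `gᴴ` is conjugate to `g⁻¹` and `tr g` is real.

Conversely, the Cayley–Hamilton identities `X² = tr X • X - 1` and
`XY + YX = tr X • Y + tr Y • X + (tr (XY) - tr X tr Y) • 1` put every word in `P, Q, R` into the
real span of the eight products `Pᵃ Qᵇ Rᶜ` (`a, b, c ∈ {0, 1}`), so all traces on `G` are real.
Then `g ↦ g` and `g ↦ (g⁻¹)ᴴ` are two representations with equal traces. By irreducibility and
Burnside's theorem each of them spans `M₂(ℂ)`, so nondegeneracy of the trace form makes
`g ↦ (g⁻¹)ᴴ` extend to an algebra automorphism of `M₂(ℂ)`. This automorphism is inner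
(Skolem–Noether): `X g X⁻¹ = (g⁻¹)ᴴ`, i.e. `gᴴ X g = X`. Either `X + Xᴴ` or `i • X` is then a
nonzero invariant Hermitian form, and Schur's lemma makes it nondegenerate.
-/

namespace Matrix

variable {R : Type*} [CommRing R]

theorem adjugate_fin_two_eq_trace_smul_sub (A : Matrix (Fin 2) (Fin 2) R) :
    adjugate A = trace A • 1 - A := by
  ext i j
  fin_cases i <;> fin_cases j <;> simp [adjugate_fin_two, trace_fin_two]

theorem mul_self_fin_two (A : Matrix (Fin 2) (Fin 2) R) :
    A * A = trace A • A - det A • 1 := by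
  ext i j
  fin_cases i <;> fin_cases j <;> simp [mul_apply, trace_fin_two, det_fin_two] <;> ring

theorem mul_add_mul_swap_fin_two (A B : Matrix (Fin 2) (Fin 2) R) :
    A * B + B * A = trace A • B + trace B • A + (trace (A * B) - trace A * trace B) • 1 := by
  ext i j
  fin_cases i <;> fin_cases j <;> simp [mul_apply, trace_fin_two] <;> ring

end Matrix

open Matrix Pointwise

section Fricke

variable {K R : Type*} [CommRing K] [CommRing R] [Algebra K R]

theorem span_insert_one_mul_self_le {A : Matrix (Fin 2) (Fin 2) R}
    (htr : trace A ∈ Set.range (algebraMap K R)) (hdet : det A ∈ Set.range (algebraMap K R)) :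
    Submodule.span K {1, A} * Submodule.span K {1, A} ≤ Submodule.span K {1, A} := by
  obtain ⟨t, ht⟩ := htr
  obtain ⟨d, hd⟩ := hdet
  have h1 : (1 : Matrix (Fin 2) (Fin 2) R) ∈ Submodule.span K {1, A} :=
    Submodule.subset_span (by simp)
  have hA : A ∈ Submodule.span K {1, A} := Submodule.subset_span (by simp)
  have hAA : A * A ∈ Submodule.span K {1, A} := by
    rw [mul_self_fin_two, ← ht, ← hd, algebraMap_smul, algebraMap_smul]
    exact sub_mem (Submodule.smul_mem _ _ hA) (Submodule.smul_mem _ _ h1)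
  rw [Submodule.span_mul_span, Submodule.span_le]
  rintro _ ⟨x, hx, y, hy, rfl⟩
  rcases hx with rfl | rfl <;> rcases hy with rfl | rfl <;> simpa

theorem span_insert_one_mul_comm_le {A B : Matrix (Fin 2) (Fin 2) R}
    (hA : trace A ∈ Set.range (algebraMap K R)) (hB : trace B ∈ Set.range (algebraMap K R))
    (hAB : trace (A * B) ∈ Set.range (algebraMap K R)) :
    Submodule.span K {1, B} * Submodule.span K {1, A} ≤
      Submodule.span K {1, A} * Submodule.span K {1, B} := by
  obtain ⟨a, ha⟩ := hA
  obtain ⟨b, hb⟩ := hB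
  obtain ⟨c, hc⟩ := hAB
  have mem {x y : Matrix (Fin 2) (Fin 2) R} (hx : x ∈ ({1, A} : Set _))
      (hy : y ∈ ({1, B} : Set _)) : x * y ∈ Submodule.span K {1, A} * Submodule.span K {1, B} :=
    Submodule.mul_mem_mul (Submodule.subset_span hx) (Submodule.subset_span hy)
  have m1 := mem (x := 1) (y := 1) (by simp) (by simp)
  have mA := mem (x := A) (y := 1) (by simp) (by simp)
  have mB := mem (x := 1) (y := B) (by simp) (by simp)
  have mAB := mem (x := A) (y := B) (by simp) (by simp)
  simp only [one_mul, mul_one] at m1 mA mB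
  have mBA : B * A ∈ Submodule.span K {1, A} * Submodule.span K {1, B} := by
    have h := mul_add_mul_swap_fin_two A B
    rw [← ha, ← hb, ← hc, ← map_mul, ← map_sub, algebraMap_smul, algebraMap_smul,
      algebraMap_smul] at h
    rw [show B * A = -(A * B) + (A * B + B * A) by abel, h]
    exact add_mem (neg_mem mAB) (add_mem (add_mem (Submodule.smul_mem _ _ mB)
      (Submodule.smul_mem _ _ mA)) (Submodule.smul_mem _ _ m1))
  rw [Submodule.span_mul_span, Submodule.span_le]
  rintro _ ⟨y, hy, x, hx, rfl⟩
  rcases hx with rfl | rfl <;> rcases hy with rfl | rfl <;> simpa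

theorem mem_span_mul_of_mem_closure {A B C : Matrix (Fin 2) (Fin 2) R}
    (hdA : det A ∈ Set.range (algebraMap K R)) (hdB : det B ∈ Set.range (algebraMap K R))
    (hdC : det C ∈ Set.range (algebraMap K R))
    (hA : trace A ∈ Set.range (algebraMap K R)) (hB : trace B ∈ Set.range (algebraMap K R))
    (hC : trace C ∈ Set.range (algebraMap K R))
    (hAB : trace (A * B) ∈ Set.range (algebraMap K R))
    (hBC : trace (B * C) ∈ Set.range (algebraMap K R))
    (hAC : trace (A * C) ∈ Set.range (algebraMap K R)) {w : Matrix (Fin 2) (Fin 2) R}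
    (hw : w ∈ Submonoid.closure {A, B, C}) :
    w ∈ Submodule.span K {1, A} * Submodule.span K {1, B} * Submodule.span K {1, C} := by
  set L : Matrix (Fin 2) (Fin 2) R → Submodule K (Matrix (Fin 2) (Fin 2) R) :=
    fun X => Submodule.span K {1, X}
  have one_mem (X) : 1 ∈ L X := Submodule.subset_span (by simp)
  have self_mem (X) : X ∈ L X := Submodule.subset_span (by simp)
  have hAA := span_insert_one_mul_self_le hA hdA
  have hBB := span_insert_one_mul_self_le hB hdB
  have hCC := span_insert_one_mul_self_le hC hdC
  have hBA := span_insert_one_mul_comm_le hA hB hAB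
  have hCA := span_insert_one_mul_comm_le hA hC hAC
  have hCB := span_insert_one_mul_comm_le hB hC hBC
  induction hw using Submonoid.closure_induction_left with
  | one =>
    simpa using Submodule.mul_mem_mul (Submodule.mul_mem_mul (one_mem A) (one_mem B)) (one_mem C)
  | mul_left x hx y _ hy =>
    refine (?_ : L x * _ ≤ _) (Submodule.mul_mem_mul (self_mem x) hy)
    rcases hx with h | h | h <;> subst x
    · calc L A * (L A * L B * L C) = L A * L A * L B * L C := by simp only [mul_assoc]
        _ ≤ L A * L B * L C := by gcongr
    · calc L B * (L A * L B * L C) = L B * L A * L B * L C := by simp only [mul_assoc]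
        _ ≤ L A * L B * L B * L C := by gcongr
        _ = L A * (L B * L B) * L C := by simp only [mul_assoc]
        _ ≤ L A * L B * L C := by gcongr
    · calc L C * (L A * L B * L C) = L C * L A * L B * L C := by simp only [mul_assoc]
        _ ≤ L A * (L C * L B) * L C := by rw [← mul_assoc]; gcongr
        _ ≤ L A * (L B * L C) * L C := by gcongr
        _ = L A * L B * (L C * L C) := by simp only [mul_assoc]
        _ ≤ L A * L B * L C := by gcongr

theorem trace_mem_range_of_mem_span_mul {A B C : Matrix (Fin 2) (Fin 2) R}
    (hA : trace A ∈ Set.range (algebraMap K R)) (hB : trace B ∈ Set.range (algebraMap K R))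
    (hC : trace C ∈ Set.range (algebraMap K R))
    (hAB : trace (A * B) ∈ Set.range (algebraMap K R))
    (hBC : trace (B * C) ∈ Set.range (algebraMap K R))
    (hAC : trace (A * C) ∈ Set.range (algebraMap K R))
    (hABC : trace (A * B * C) ∈ Set.range (algebraMap K R)) {w : Matrix (Fin 2) (Fin 2) R}
    (hw : w ∈ Submodule.span K {1, A} * Submodule.span K {1, B} * Submodule.span K {1, C}) :
    trace w ∈ Set.range (algebraMap K R) := by
  rw [Submodule.span_mul_span, Submodule.span_mul_span] at hw
  have h2 : (2 : R) ∈ Set.range (algebraMap K R) := ⟨2, map_ofNat _ 2⟩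
  suffices Submodule.span K ({1, A} * {1, B} * {1, C}) ≤
      (LinearMap.range (Algebra.linearMap K R)).comap (traceLinearMap (Fin 2) K R) by
    simpa using this hw
  rw [Submodule.span_le]
  rintro _ ⟨_, ⟨x, hx, y, hy, rfl⟩, z, hz, rfl⟩
  rcases hx with rfl | rfl <;> rcases hy with rfl | rfl <;> rcases hz with rfl | rfl <;>
    simpa [-Set.mem_range]

end Fricke

section CommonEigenvector

variable {K : Type*} [Field K]

def HasCommonEigenvector {n : Type*} [Fintype n] (S : Set (Matrix n n K)) : Prop :=
  ∃ v : n → K, v ≠ 0 ∧ ∀ g ∈ S, ∃ c : K, g *ᵥ v = c • v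

theorem Submodule.exists_smul_eq_of_ne_top {T : Submodule K (Fin 2 → K)} (hT : T ≠ ⊤)
    {u x : Fin 2 → K} (hu : u ∈ T) (hu0 : u ≠ 0) (hx : x ∈ T) : ∃ c : K, c • u = x := by
  have hlt : Module.finrank K T < 2 := by simpa using Submodule.finrank_lt hT
  have hpos : Module.finrank K T ≠ 0 := by
    rw [Ne, Submodule.finrank_eq_zero]
    exact fun h => hu0 (by simpa [h] using hu)
  have h1 : Module.finrank K T = 1 := by omega
  obtain ⟨c, hc⟩ := (finrank_eq_one_iff_of_nonzero' (⟨u, hu⟩ : T) (by simpa using hu0)).1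
    h1 ⟨x, hx⟩
  exact ⟨c, congrArg Subtype.val hc⟩

theorem hasCommonEigenvector_of_invariant {S : Set (Matrix (Fin 2) (Fin 2) K)}
    {T : Submodule K (Fin 2 → K)} (hbot : T ≠ ⊥) (htop : T ≠ ⊤)
    (hT : ∀ g ∈ S, ∀ x ∈ T, g *ᵥ x ∈ T) : HasCommonEigenvector S := by
  obtain ⟨u, hu, hu0⟩ := T.ne_bot_iff.1 hbot
  exact ⟨u, hu0, fun g hg => (T.exists_smul_eq_of_ne_top htop hu hu0 (hT g hg u hu)).imp
    fun _ => Eq.symm⟩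

theorem exists_ne_zero_forall_dotProduct_eq_zero_iff {v : Fin 2 → K} (hv : v ≠ 0) :
    ∃ w₀ ≠ 0, ∀ w, v ⬝ᵥ w = 0 ↔ ∃ c : K, c • w₀ = w := by
  have hw₀ : v ⬝ᵥ ![v 1, -v 0] = 0 := by simp [dotProduct, Fin.sum_univ_two]; ring
  have hw₀0 : ![v 1, -v 0] ≠ 0 := fun h => hv <| by
    have h0 := congrFun h 0
    have h1 := congrFun h 1
    ext i; fin_cases i <;> simp_all
  obtain ⟨i, hi⟩ := Function.ne_iff.1 hv
  have htop : LinearMap.ker (dotProductBilin K K v) ≠ ⊤ := fun h => hi <| by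
    simpa [dotProduct_single] using LinearMap.congr_fun (LinearMap.ker_eq_top.1 h) (Pi.single i 1)
  refine ⟨_, hw₀0, fun w => ⟨fun hw => Submodule.exists_smul_eq_of_ne_top htop hw₀ hw₀0 hw, ?_⟩⟩
  rintro ⟨c, rfl⟩
  rw [dotProduct_smul, hw₀, smul_zero]

theorem HasCommonEigenvector.of_transpose {S : Set (Matrix (Fin 2) (Fin 2) K)}
    (h : HasCommonEigenvector (transpose '' S)) : HasCommonEigenvector S := by
  obtain ⟨v, hv, hS⟩ := h
  obtain ⟨w₀, hw₀, hw⟩ := exists_ne_zero_forall_dotProduct_eq_zero_iff hv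
  refine ⟨w₀, hw₀, fun g hg => ?_⟩
  obtain ⟨c, hc⟩ := hS _ ⟨g, hg, rfl⟩
  obtain ⟨d, hd⟩ := (hw (g *ᵥ w₀)).1 <| by
    rw [dotProduct_mulVec, ← mulVec_transpose, hc, smul_dotProduct, (hw w₀).2 ⟨1, one_smul _ _⟩,
      smul_zero]
  exact ⟨d, hd.symm⟩

theorem HasCommonEigenvector.of_adjugate {S : Set (Matrix (Fin 2) (Fin 2) K)}
    (h : HasCommonEigenvector (adjugate '' S)) : HasCommonEigenvector S := by
  obtain ⟨v, hv, hS⟩ := h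
  refine ⟨v, hv, fun g hg => ?_⟩
  obtain ⟨c, hc⟩ := hS _ ⟨g, hg, rfl⟩
  refine ⟨trace g - c, ?_⟩
  rw [adjugate_fin_two_eq_trace_smul_sub, sub_mulVec, smul_mulVec, one_mulVec, sub_eq_iff_eq_add]
    at hc
  rw [sub_smul, hc, add_sub_cancel_left]

theorem exists_nonscalar_of_not_hasCommonEigenvector {S : Set (Matrix (Fin 2) (Fin 2) K)}
    (hS : ¬ HasCommonEigenvector S) : ∃ g ∈ S, ∀ c : K, g ≠ c • 1 := by
  by_contra! h
  refine hS ⟨Pi.single 0 1, by simp, fun g hg => ?_⟩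
  obtain ⟨c, rfl⟩ := h g hg
  exact ⟨c, by rw [smul_mulVec, one_mulVec]⟩

theorem exists_mem_mulVec_eq {S : Set (Matrix (Fin 2) (Fin 2) K)} (hS : ¬ HasCommonEigenvector S)
    {M : Submodule K (Matrix (Fin 2) (Fin 2) K)} (hM1 : 1 ∈ M) (hSM : ∀ g ∈ S, ∀ a ∈ M, g * a ∈ M)
    {u : Fin 2 → K} (hu : u ≠ 0) (x : Fin 2 → K) : ∃ a ∈ M, a *ᵥ u = x := by
  suffices M.map ((mulVecBilin K K).flip u) = ⊤ by
    simpa using this.ge (Submodule.mem_top (x := x))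
  by_contra htop
  refine hS (hasCommonEigenvector_of_invariant ?_ htop ?_)
  · exact (Submodule.ne_bot_iff _).2 ⟨u, ⟨1, hM1, by simp⟩, hu⟩
  · rintro g hg _ ⟨a, ha, rfl⟩
    exact ⟨g * a, hSM g hg a ha, by simp⟩

theorem exists_eq_vecMulVec_of_mulVec_eq_zero {t : Matrix (Fin 2) (Fin 2) K} {v : Fin 2 → K}
    (hv : v ≠ 0) (htv : t *ᵥ v = 0) : ∃ u w : Fin 2 → K, t = vecMulVec u w := by
  obtain ⟨w₀, -, hw⟩ := exists_ne_zero_forall_dotProduct_eq_zero_iff hv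
  choose u hu using fun i => (hw (t i)).1 (by rw [dotProduct_comm]; exact congrFun htv i)
  exact ⟨u, w₀, by ext i j; simp [vecMulVec, ← hu i]⟩

theorem det_ne_zero_of_mul_eq_mul {S : Set (Matrix (Fin 2) (Fin 2) K)}
    (hS : ¬ HasCommonEigenvector S) {Y : Matrix (Fin 2) (Fin 2) K} (hY : Y ≠ 0)
    (hYS : ∀ g ∈ S, ∃ g', Y * g = g' * Y) : Y.det ≠ 0 := by
  intro hdet
  refine hS (hasCommonEigenvector_of_invariant (T := LinearMap.ker (mulVecLin Y)) ?_ ?_ ?_)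
  · obtain ⟨v, hv, hYv⟩ := exists_mulVec_eq_zero_iff.2 hdet
    exact (Submodule.ne_bot_iff _).2 ⟨v, hYv, hv⟩
  · rwa [Ne, LinearMap.ker_eq_top, ← toLin'_apply', map_eq_zero_iff _ toLin'.injective]
  · intro g hg x hx
    obtain ⟨g', hg'⟩ := hYS g hg
    rw [LinearMap.mem_ker, mulVecLin_apply] at hx ⊢
    rw [mulVec_mulVec, hg', ← mulVec_mulVec, hx, mulVec_zero]

end CommonEigenvector

section Burnside

theorem Subalgebra.eq_top_of_vecMulVec_mem {n K : Type*} [Fintype n] [DecidableEq n] [Field K]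
    {𝒜 : Subalgebra K (Matrix n n K)} (h : ∀ x y, vecMulVec x y ∈ 𝒜) : 𝒜 = ⊤ := by
  refine Algebra.eq_top_iff.2 fun M => ?_
  rw [matrix_eq_sum_single M]
  refine sum_mem fun i _ => sum_mem fun j _ => ?_
  rw [← mul_one (M i j), ← smul_eq_mul, ← smul_single, single_eq_single_vecMulVec_single]
  exact Subalgebra.smul_mem _ (h _ _) _

variable {K : Type*} [Field K] [IsAlgClosed K]

/-- Burnside's theorem in dimension two. -/
theorem Algebra.adjoin_eq_top_of_not_hasCommonEigenvector {S : Set (Matrix (Fin 2) (Fin 2) K)}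
    (hS : ¬ HasCommonEigenvector S) : Algebra.adjoin K S = ⊤ := by
  set 𝒜 := Algebra.adjoin K S
  obtain ⟨g, hg, hgc⟩ := exists_nonscalar_of_not_hasCommonEigenvector hS
  obtain ⟨c, hc⟩ := Module.End.exists_eigenvalue (toLin' g)
  obtain ⟨v, hv⟩ := hc.exists_hasEigenvector
  -- `t` has rank one, and irreducibility puts every rank-one matrix in `𝒜 * t * 𝒜`.
  set t := g - c • 1
  have ht𝒜 : t ∈ 𝒜 := sub_mem (Algebra.subset_adjoin hg) (Subalgebra.smul_mem _ (one_mem _) c)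
  have ht0 : t ≠ 0 := sub_ne_zero.2 (hgc c)
  have htv : t *ᵥ v = 0 := by
    rw [sub_mulVec, smul_mulVec, one_mulVec, ← toLin'_apply, hv.apply_eq_smul, sub_self]
  obtain ⟨u, w, htuw⟩ := exists_eq_vecMulVec_of_mulVec_eq_zero hv.2 htv
  have hu : u ≠ 0 := by rintro rfl; simp [htuw] at ht0
  have hw : w ≠ 0 := by rintro rfl; simp [htuw] at ht0
  have col := exists_mem_mulVec_eq hS (M := Subalgebra.toSubmodule 𝒜) (one_mem 𝒜)
    (fun g hg a ha => (Subalgebra.mem_toSubmodule _).2 (mul_mem (Algebra.subset_adjoin hg) ha)) hu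
  have row := exists_mem_mulVec_eq (mt HasCommonEigenvector.of_transpose hS)
    (M := (Subalgebra.toSubmodule 𝒜).comap (transposeLinearEquiv (Fin 2) (Fin 2) K K).toLinearMap)
    (show (1 : Matrix (Fin 2) (Fin 2) K)ᵀ ∈ 𝒜 by simp)
    (by rintro _ ⟨g, hg, rfl⟩ a (ha : aᵀ ∈ 𝒜)
        show (gᵀ * a)ᵀ ∈ 𝒜
        simpa using mul_mem ha (Algebra.subset_adjoin hg)) hw
  refine Subalgebra.eq_top_of_vecMulVec_mem fun x y => ?_
  obtain ⟨a, ha, rfl⟩ := col x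
  obtain ⟨b, hb, rfl⟩ := row y
  have : vecMulVec (a *ᵥ u) (b *ᵥ w) = a * t * bᵀ := by
    rw [htuw, mul_vecMulVec, vecMulVec_mul, ← mulVec_transpose, transpose_transpose]
  rw [this]
  exact mul_mem (mul_mem ha ht𝒜) hb

end Burnside

section SkolemNoether

variable {n K : Type*} [Fintype n] [DecidableEq n] [Field K]

theorem AlgHom.injective_of_trace_eq {A : Type*} [Ring A] [Algebra K A]
    (f g : A →ₐ[K] Matrix n n K) (hg : Function.Surjective g)
    (hfg : ∀ a, f a = 0 → g a = 0 → a = 0) (htr : ∀ a, trace (f a) = trace (g a)) :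
    Function.Injective f := by
  refine (injective_iff_map_eq_zero f).2 fun a ha => hfg a ha ?_
  refine ext_iff_trace_mul_left.2 fun x => ?_
  obtain ⟨b, rfl⟩ := hg x
  rw [← map_mul, ← htr, map_mul, ha, mul_zero, mul_zero]

theorem exists_algEquiv_apply_eq_of_trace_eq {A : Type*} [Ring A] [Algebra K A]
    (f g : A →ₐ[K] Matrix n n K) (hf : Function.Surjective f) (hg : Function.Surjective g)
    (hfg : ∀ a, f a = 0 → g a = 0 → a = 0) (htr : ∀ a, trace (f a) = trace (g a)) :
    ∃ φ : Matrix n n K ≃ₐ[K] Matrix n n K, ∀ a, φ (f a) = g a := by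
  let ef := AlgEquiv.ofBijective f ⟨f.injective_of_trace_eq g hg hfg htr, hf⟩
  let eg := AlgEquiv.ofBijective g ⟨g.injective_of_trace_eq f hf (fun a hg hf => hfg a hf hg)
    (fun a => (htr a).symm), hg⟩
  refine ⟨ef.symm.trans eg, fun a => ?_⟩
  rw [AlgEquiv.trans_apply, show f a = ef a from rfl, ef.symm_apply_apply]
  rfl

theorem AlgEquiv.exists_isUnit_mul_eq_mul (φ : Matrix n n K ≃ₐ[K] Matrix n n K) :
    ∃ X : Matrix n n K, IsUnit X ∧ ∀ a, X * a = φ a * X := by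
  obtain ⟨T, hT⟩ := (toLinAlgEquiv'.symm.trans (φ.trans toLinAlgEquiv')).eq_linearEquivConjAlgEquiv
  refine ⟨toLinAlgEquiv'.symm T.toLinearMap,
    ((Module.End.isUnit_iff _).2 T.bijective).map _, fun a => toLinAlgEquiv'.injective ?_⟩
  have h := congr($hT (toLinAlgEquiv' a))
  rw [AlgEquiv.trans_apply, AlgEquiv.symm_apply_apply, AlgEquiv.trans_apply,
    LinearEquiv.conjAlgEquiv_apply] at h
  rw [map_mul, map_mul, h, AlgEquiv.apply_symm_apply]
  ext
  simp

theorem exists_isUnit_mul_eq_mul_of_trace_eq (ρ : Matrix n n K →* Matrix n n K)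
    {S : Set (Matrix n n K)} (hS : Algebra.adjoin K S = ⊤) (hρS : Algebra.adjoin K (ρ '' S) = ⊤)
    (htr : ∀ g ∈ Submonoid.closure S, trace (ρ g) = trace g) :
    ∃ X : Matrix n n K, IsUnit X ∧ ∀ g ∈ S, X * g = ρ g * X := by
  -- The subalgebra generated by the pairs `(g, ρ g)` is the graph of an automorphism.
  set F := (MonoidHom.id _).prod ρ
  set B := Algebra.adjoin K (F '' S)
  let f := (AlgHom.fst K _ _).comp B.val
  let g := (AlgHom.snd K _ _).comp B.val
  have hf : Function.Surjective f := by
    rw [← AlgHom.range_eq_top, AlgHom.range_comp, Subalgebra.range_val, AlgHom.map_adjoin,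
      Set.image_image]
    simpa [F] using hS
  have hg : Function.Surjective g := by
    rw [← AlgHom.range_eq_top, AlgHom.range_comp, Subalgebra.range_val, AlgHom.map_adjoin,
      Set.image_image]
    simpa [F] using hρS
  have htrB : ∀ p ∈ B, trace p.1 = trace p.2 := by
    intro p hp
    rw [← Subalgebra.mem_toSubmodule, Algebra.adjoin_eq_span, ← MonoidHom.map_mclosure] at hp
    refine LinearMap.eqOn_span (f := (traceLinearMap n K K).comp (LinearMap.fst K _ _))
      (g := (traceLinearMap n K K).comp (LinearMap.snd K _ _)) ?_ hp
    rintro _ ⟨w, hw, rfl⟩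
    exact (htr w hw).symm
  obtain ⟨φ, hφ⟩ := exists_algEquiv_apply_eq_of_trace_eq f g hf hg
    (fun a h1 h2 => Subtype.ext (Prod.ext h1 h2)) (fun a => htrB a a.2)
  obtain ⟨X, hX, hXφ⟩ := φ.exists_isUnit_mul_eq_mul
  refine ⟨X, hX, fun x hx => ?_⟩
  rw [hXφ, show x = f ⟨F x, Algebra.subset_adjoin ⟨x, hx, rfl⟩⟩ from rfl, hφ]
  rfl

end SkolemNoether

section InvariantForm

variable {n R : Type*} [Fintype n] [DecidableEq n] [CommRing R] [StarRing R]

@[simps]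
noncomputable def adjugateConjTransposeHom : Matrix n n R →* Matrix n n R where
  toFun A := (adjugate A)ᴴ
  map_one' := by simp
  map_mul' A B := by rw [adjugate_mul_distrib, conjTranspose_mul]

theorem trace_adjugate_conjTranspose (A : Matrix (Fin 2) (Fin 2) R) :
    trace (adjugate A)ᴴ = star (trace A) := by
  rw [trace_conjTranspose, adjugate_fin_two_eq_trace_smul_sub, trace_sub, trace_smul, trace_one]
  simp only [Fintype.card_fin, smul_eq_mul]
  congr 1
  ring

theorem conjTranspose_mul_mul_eq_self_iff {A : Matrix n n R} (hA : A.det = 1) (H : Matrix n n R) :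
    Aᴴ * H * A = H ↔ H * A = (adjugate A)ᴴ * H := by
  have h₁ : (adjugate A)ᴴ * Aᴴ = 1 := by
    rw [← conjTranspose_mul, mul_adjugate, hA, one_smul, conjTranspose_one]
  have h₂ : Aᴴ * (adjugate A)ᴴ = 1 := by
    rw [← conjTranspose_mul, adjugate_mul, hA, one_smul, conjTranspose_one]
  constructor
  · intro h
    nth_rewrite 2 [← h]
    rw [← mul_assoc, ← mul_assoc, h₁, one_mul]
  · intro h
    rw [mul_assoc, h, ← mul_assoc, h₂, one_mul]

def formStabilizer (H : Matrix n n R) : Subgroup (SpecialLinearGroup n R) where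
  carrier := {g | (g : Matrix n n R)ᴴ * H * g = H}
  one_mem' := by simp
  mul_mem' {g h} (hg : _ = H) (hh : _ = H) := by
    show ((g * h : SpecialLinearGroup n R) : Matrix n n R)ᴴ * H * (g * h : SpecialLinearGroup n R)
      = H
    rw [Matrix.SpecialLinearGroup.coe_mul, conjTranspose_mul]
    calc _ = (h : Matrix n n R)ᴴ * ((g : Matrix n n R)ᴴ * H * g) * h := by noncomm_ring
      _ = H := by rw [hg, hh]
  inv_mem' {g} (hg : _ = H) := by
    show ((g⁻¹ : SpecialLinearGroup n R) : Matrix n n R)ᴴ * H * (g⁻¹ : SpecialLinearGroup n R) = H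
    rw [Matrix.SpecialLinearGroup.coe_inv, ← (conjTranspose_mul_mul_eq_self_iff g.2 H).1 hg,
      mul_assoc, mul_adjugate, g.2, one_smul, mul_one]

end InvariantForm

section

variable {K : Type*} [Field K] [StarRing K]

theorem HasCommonEigenvector.of_conjTranspose {n : Type*} [Fintype n] {S : Set (Matrix n n K)}
    (h : HasCommonEigenvector (conjTranspose '' S)) : HasCommonEigenvector (transpose '' S) := by
  obtain ⟨v, hv, hS⟩ := h
  refine ⟨star v, star_ne_zero.2 hv, ?_⟩
  rintro _ ⟨g, hg, rfl⟩
  obtain ⟨c, hc⟩ := hS _ ⟨g, hg, rfl⟩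
  refine ⟨star c, ?_⟩
  rw [mulVec_transpose, ← conjTranspose_conjTranspose g, ← star_mulVec, hc, star_smul]

theorem HasCommonEigenvector.of_adjugate_conjTranspose {S : Set (Matrix (Fin 2) (Fin 2) K)}
    (h : HasCommonEigenvector ((fun g => (adjugate g)ᴴ) '' S)) : HasCommonEigenvector S := by
  rw [← Set.image_image conjTranspose adjugate] at h
  exact h.of_conjTranspose.of_transpose.of_adjugate

theorem star_trace_eq_of_conjTranspose_mul_mul_eq {H g : Matrix (Fin 2) (Fin 2) K}
    (hH : H.det ≠ 0) (hg : g.det = 1) (hgH : gᴴ * H * g = H) : star (trace g) = trace g := by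
  rw [conjTranspose_mul_mul_eq_self_iff hg] at hgH
  have hg' : (adjugate g)ᴴ = H * g * H⁻¹ := by
    rw [hgH, mul_nonsing_inv_cancel_right _ _ hH.isUnit]
  rw [← trace_adjugate_conjTranspose, hg', trace_mul_comm,
    nonsing_inv_mul_cancel_left _ _ hH.isUnit]

end

theorem exists_isHermitian_ne_zero_of_conjTranspose_mul_mul_eq {n : Type*} [Fintype n]
    {S : Set (Matrix n n ℂ)} {X : Matrix n n ℂ} (hX : X ≠ 0)
    (hXS : ∀ g ∈ S, gᴴ * X * g = X) :
    ∃ H : Matrix n n ℂ, H.IsHermitian ∧ H ≠ 0 ∧ ∀ g ∈ S, gᴴ * H * g = H := by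
  by_cases h : X + Xᴴ = 0
  · refine ⟨I • X, ?_, smul_ne_zero I_ne_zero hX, fun g hg => ?_⟩
    · rw [IsHermitian, conjTranspose_smul, eq_neg_of_add_eq_zero_right h]
      simp
    · rw [mul_smul_comm, smul_mul_assoc, hXS g hg]
  · refine ⟨X + Xᴴ, isHermitian_add_transpose_self X, h, fun g hg => ?_⟩
    have := congrArg conjTranspose (hXS g hg)
    rw [conjTranspose_mul, conjTranspose_mul, conjTranspose_conjTranspose, ← mul_assoc] at this
    rw [mul_add, add_mul, hXS g hg, this]

theorem exists_isHermitian_det_ne_zero_of_star_trace_eq {S : Set (Matrix (Fin 2) (Fin 2) ℂ)}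
    (hdet : ∀ g ∈ S, g.det = 1) (hS : ¬ HasCommonEigenvector S)
    (htr : ∀ g ∈ Submonoid.closure S, star (trace g) = trace g) :
    ∃ H : Matrix (Fin 2) (Fin 2) ℂ, H.IsHermitian ∧ H.det ≠ 0 ∧ ∀ g ∈ S, gᴴ * H * g = H := by
  obtain ⟨X, hX, hXS⟩ := exists_isUnit_mul_eq_mul_of_trace_eq adjugateConjTransposeHom
    (Algebra.adjoin_eq_top_of_not_hasCommonEigenvector hS)
    (Algebra.adjoin_eq_top_of_not_hasCommonEigenvector
      (mt HasCommonEigenvector.of_adjugate_conjTranspose hS))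
    (fun g hg => by rw [adjugateConjTransposeHom_apply, trace_adjugate_conjTranspose, htr g hg])
  obtain ⟨H, hHerm, hH0, hHS⟩ := exists_isHermitian_ne_zero_of_conjTranspose_mul_mul_eq hX.ne_zero
    (fun g hg => (conjTranspose_mul_mul_eq_self_iff (hdet g hg) X).2 (hXS g hg))
  exact ⟨H, hHerm, det_ne_zero_of_mul_eq_mul hS hH0 fun g hg =>
    ⟨_, (conjTranspose_mul_mul_eq_self_iff (hdet g hg) H).1 (hHS g hg)⟩, hHS⟩

theorem isUnitarySubgroup_iff {G : Subgroup (SpecialLinearGroup (Fin 2) ℂ)} :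
    IsUnitarySubgroup G ↔
      ∃ H : Matrix (Fin 2) (Fin 2) ℂ, H.IsHermitian ∧ H.det ≠ 0 ∧ G ≤ formStabilizer H :=
  Iff.rfl

theorem IsIrreducibleSubgroup.not_hasCommonEigenvector {s : Set (SpecialLinearGroup (Fin 2) ℂ)}
    (h : IsIrreducibleSubgroup (Subgroup.closure s)) :
    ¬ HasCommonEigenvector
      ((fun g : SpecialLinearGroup (Fin 2) ℂ => (g : Matrix (Fin 2) (Fin 2) ℂ)) '' s) := by
  rintro ⟨v, hv, hs⟩
  refine h ⟨v, hv, fun g hg => ?_⟩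
  induction hg using Subgroup.closure_induction with
  | mem x hx => exact hs _ ⟨x, hx, rfl⟩
  | one => exact ⟨1, by simp⟩
  | mul x y _ _ hx hy =>
    obtain ⟨a, ha⟩ := hx
    obtain ⟨b, hb⟩ := hy
    refine ⟨a * b, ?_⟩
    rw [Matrix.SpecialLinearGroup.coe_mul, ← mulVec_mulVec, hb, mulVec_smul, ha, smul_smul,
      mul_comm]
  | inv x _ hx =>
    obtain ⟨c, hc⟩ := hx
    refine ⟨trace (x : Matrix (Fin 2) (Fin 2) ℂ) - c, ?_⟩
    rw [Matrix.SpecialLinearGroup.coe_inv, adjugate_fin_two_eq_trace_smul_sub, sub_mulVec,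
      smul_mulVec, one_mulVec, hc, sub_smul]

theorem Complex.im_eq_zero_iff_mem_range {z : ℂ} :
    z.im = 0 ↔ z ∈ Set.range (algebraMap ℝ ℂ) := by
  rw [← conj_eq_iff_im, conj_eq_iff_real]
  simp [eq_comm]

/-- For an irreducible group generated by three elements of `SL(2,ℂ)`, unitarity is equivalent
to the seven Fricke traces being real. -/
theorem unitary_iff_real_traces
    (P Q R : Matrix.SpecialLinearGroup (Fin 2) ℂ)
    (G : Subgroup (Matrix.SpecialLinearGroup (Fin 2) ℂ))
    (hG : G = Subgroup.closure {P, Q, R})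
    (hirr : IsIrreducibleSubgroup G) :
    IsUnitarySubgroup G ↔
      ((trSL P).im = 0 ∧ (trSL Q).im = 0 ∧ (trSL R).im = 0 ∧
       (trSL (P * Q)).im = 0 ∧ (trSL (Q * R)).im = 0 ∧ (trSL (P * R)).im = 0 ∧
       (trSL (P * Q * R)).im = 0) := by
  subst hG
  set S : Set (Matrix (Fin 2) (Fin 2) ℂ) := {↑P, ↑Q, ↑R}
  have hdet : ∀ g ∈ S, g.det = 1 := by rintro _ (rfl | rfl | rfl) <;> simp
  have memP : P ∈ Subgroup.closure {P, Q, R} := Subgroup.subset_closure (by simp)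
  have memQ : Q ∈ Subgroup.closure {P, Q, R} := Subgroup.subset_closure (by simp)
  have memR : R ∈ Subgroup.closure {P, Q, R} := Subgroup.subset_closure (by simp)
  rw [isUnitarySubgroup_iff]
  constructor
  · rintro ⟨H, -, hH, hle⟩
    have real (g) (hg : g ∈ Subgroup.closure {P, Q, R}) : (trSL g).im = 0 :=
      conj_eq_iff_im.1 (star_trace_eq_of_conjTranspose_mul_mul_eq hH g.2 (hle hg))
    exact ⟨real P memP, real Q memQ, real R memR, real _ (mul_mem memP memQ),
      real _ (mul_mem memQ memR), real _ (mul_mem memP memR),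
      real _ (mul_mem (mul_mem memP memQ) memR)⟩
  · rintro ⟨hP, hQ, hR, hPQ, hQR, hPR, hPQR⟩
    simp only [trSL, Complex.im_eq_zero_iff_mem_range] at hP hQ hR hPQ hQR hPR hPQR
    have htr (w) (hw : w ∈ Submonoid.closure S) : star (trace w) = trace w :=
      conj_eq_iff_im.2 <| Complex.im_eq_zero_iff_mem_range.2 <|
        trace_mem_range_of_mem_span_mul hP hQ hR hPQ hQR hPR hPQR <|
          mem_span_mul_of_mem_closure ⟨1, by simp⟩ ⟨1, by simp⟩ ⟨1, by simp⟩ hP hQ hR hPQ hQR hPR hw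
    obtain ⟨H, hHerm, hH, hHS⟩ := exists_isHermitian_det_ne_zero_of_star_trace_eq hdet
      (by simpa [S, Set.image_insert_eq] using hirr.not_hasCommonEigenvector) htr
    refine ⟨H, hHerm, hH, (Subgroup.closure_le _).2 ?_⟩
    rintro g (rfl | rfl | rfl) <;> exact hHS _ (by simp [S])
end

section
/- Let G be a subgroup of SL(2,ℂ) whose natural action on ℂ² is reducible. Then G is unitary if and only if there exists an invertible 2×2 complex matrix T such that either (a) for every g ∈ G, T⁻¹ g T has real entries and lies in SO(2,ℝ) (real orthogonal with determinant 1), or (b) for every g ∈ G, T⁻¹ g T is upper-triangular with all real entries (and determinant 1). -/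
open Matrix Complex

/-- The natural action of `G ⊆ SL(2,ℂ)` on `ℂ²` is reducible if there is a nonzero common
eigenvector. -/
def IsReducibleSubgroup (G : Subgroup (Matrix.SpecialLinearGroup (Fin 2) ℂ)) : Prop :=
  ∃ v : Fin 2 → ℂ, v ≠ 0 ∧ ∀ g ∈ G, ∃ c : ℂ, (g : Matrix (Fin 2) (Fin 2) ℂ) *ᵥ v = c • v

/-!
Conjugating by a matrix whose first column is the common eigenvector makes `G` upper
triangular and transports the invariant Hermitian form `K`. If the eigenvector is not
`K`-isotropic, a shear diagonalises `K`; an upper-triangular isometry of determinant one is then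
`diag(a, ā)` with `|a| = 1`, and conjugating by the common eigenbasis `(1, ∓i)` of the rotations
turns these into elements of `SO(2,ℝ)`. If it is isotropic, an upper-triangular change of basis
brings `K` to `i J`, with `J` the standard symplectic form. Since `gᵀ J g = (det g) J`, a
`g ∈ SL(2,ℂ)` preserving `i J` has `gᴴ = gᵀ`, i.e. it is real. Conversely `SO(2,ℝ)` preserves the
standard form and `SL(2,ℝ)` preserves `i J`.
-/

section Congruence

variable {n R : Type*} [Fintype n] [DecidableEq n] [CommRing R]

theorem conj'_mul (A B M : Matrix n n R) :
    (A * B)⁻¹ * M * (A * B) = B⁻¹ * (A⁻¹ * M * A) * B := by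
  rw [Matrix.mul_inv_rev]
  simp only [Matrix.mul_assoc]

theorem inv_mul_mul_apply_eq_zero_of_mulVec_col {T g : Matrix n n R} (hT : IsUnit T.det)
    {j : n} {c : R} (hg : g *ᵥ T.col j = c • T.col j) {i : n} (hij : i ≠ j) :
    (T⁻¹ * g * T) i j = 0 := by
  have hcol : (T⁻¹ * g * T).col j = c • Pi.single j 1 := by
    rw [← mulVec_single_one, ← mulVec_mulVec, mulVec_single_one, ← mulVec_mulVec, hg,
      mulVec_smul, ← mulVec_single_one, mulVec_mulVec, nonsing_inv_mul _ hT, one_mulVec]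
  simpa [hij] using congrFun hcol i

variable [StarRing R]

theorem conjTranspose_conj'_mul_mul_conj' {S M K : Matrix n n R} (hS : IsUnit S.det)
    (h : Mᴴ * K * M = K) : (S⁻¹ * M * S)ᴴ * (Sᴴ * K * S) * (S⁻¹ * M * S) = Sᴴ * K * S :=
  calc (S⁻¹ * M * S)ᴴ * (Sᴴ * K * S) * (S⁻¹ * M * S)
      = Sᴴ * (Mᴴ * ((S * S⁻¹)ᴴ * K * (S * S⁻¹)) * M) * S := by
        simp only [conjTranspose_mul, Matrix.mul_assoc]
    _ = Sᴴ * K * S := by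
        rw [mul_nonsing_inv _ hS, conjTranspose_one, Matrix.one_mul, Matrix.mul_one, h]

end Congruence

theorem conjTranspose_eq_transpose_iff {m n : Type*} (M : Matrix m n ℂ) :
    Mᴴ = Mᵀ ↔ ∀ i j, (M i j).im = 0 := by
  simp only [← Matrix.ext_iff, conjTranspose_apply, transpose_apply, star_def, conj_eq_iff_im]
  exact ⟨fun h i j => h j i, fun h i j => h j i⟩

open scoped ComplexConjugate

local notation "M₂" => Matrix (Fin 2) (Fin 2) ℂ

def hermitianJ : M₂ := !![0, I; -I, 0]

def IsRealRotation (M : M₂) : Prop :=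
  (∀ i j, (M i j).im = 0) ∧ Mᵀ * M = 1 ∧ M.det = 1

def IsRealUpperTriangularSL (M : M₂) : Prop :=
  M 1 0 = 0 ∧ (∀ i j, (M i j).im = 0) ∧ M.det = 1

theorem isHermitian_hermitianJ : hermitianJ.IsHermitian := by
  ext i j
  fin_cases i <;> fin_cases j <;> simp [hermitianJ]

theorem det_hermitianJ : hermitianJ.det = -1 := by
  simp [hermitianJ, det_fin_two_of]

theorem transpose_mul_hermitianJ_mul (M : M₂) : Mᵀ * hermitianJ * M = M.det • hermitianJ := by
  rw [eta_fin_two M, det_fin_two_of, hermitianJ]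
  ext i j
  fin_cases i <;> fin_cases j <;> simp [Matrix.mul_apply, Fin.sum_univ_two] <;> ring

theorem conjTranspose_mul_hermitianJ_mul_eq_iff {M : M₂} (hM : M.det = 1) :
    Mᴴ * hermitianJ * M = hermitianJ ↔ ∀ i j, (M i j).im = 0 := by
  have hJM : Mᵀ * hermitianJ * M = hermitianJ := by
    rw [transpose_mul_hermitianJ_mul, hM, one_smul]
  rw [← conjTranspose_eq_transpose_iff]
  refine ⟨fun h => ?_, fun h => h ▸ hJM⟩
  have hunit : IsUnit (hermitianJ * M) := by
    rw [isUnit_iff_isUnit_det, det_mul, det_hermitianJ, hM, mul_one]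
    exact isUnit_one.neg
  refine hunit.mul_right_cancel ?_
  rw [← Matrix.mul_assoc, ← Matrix.mul_assoc, h, hJM]

theorem inv_mul_mul_apply_one_zero {S M : M₂} (hS : S 1 0 = 0) (hM : M 1 0 = 0) :
    (S⁻¹ * M * S) 1 0 = 0 := by
  have hS' : (S⁻¹ : M₂) 1 0 = 0 := by simp [Matrix.inv_def, adjugate_fin_two, hS]
  simp [Matrix.mul_apply, Fin.sum_univ_two, hS, hS', hM]

theorem conj_mul_self_eq_one_and_eq_of_conjTranspose_mul_diag_mul {M : M₂} {p q : ℂ}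
    (hp : p ≠ 0) (hM : M 1 0 = 0) (hdet : M.det = 1)
    (h : Mᴴ * !![p, 0; 0, q] * M = !![p, 0; 0, q]) :
    conj (M 0 0) * M 0 0 = 1 ∧ M = !![M 0 0, 0; 0, conj (M 0 0)] := by
  have e00 := congrFun (congrFun h 0) 0
  have e01 := congrFun (congrFun h 0) 1
  simp [Matrix.mul_apply, Fin.sum_univ_two, hM] at e00 e01
  rw [det_fin_two, hM, mul_zero, sub_zero] at hdet
  have ha : M 0 0 ≠ 0 := left_ne_zero_of_mul_eq_one hdet
  have hb : M 0 1 = 0 := e01.resolve_left (by simp [ha, hp])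
  have hunit : conj (M 0 0) * M 0 0 = 1 := mul_right_cancel₀ hp (by linear_combination e00)
  have hd : M 1 1 = conj (M 0 0) := by
    linear_combination (-M 1 1) * hunit + conj (M 0 0) * hdet
  refine ⟨hunit, ?_⟩
  ext i j
  fin_cases i <;> fin_cases j <;> simp [hM, hb, hd]

theorem exists_conj_diag_isRealRotation :
    ∃ C : M₂, IsUnit C.det ∧
      ∀ a : ℂ, conj a * a = 1 → IsRealRotation (C⁻¹ * !![a, 0; 0, conj a] * C) := by
  have hC : IsUnit (!![1, I; 1, -I] : M₂).det := by
    rw [det_fin_two_of, show (1 : ℂ) * -I - I * 1 = -2 * I by ring]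
    simp [I_ne_zero]
  refine ⟨!![1, I; 1, -I], hC, fun a ha => ?_⟩
  obtain ⟨x, y, rfl⟩ : ∃ x y : ℝ, a = x + y * I := ⟨a.re, a.im, (re_add_im a).symm⟩
  have hconj : conj ((x : ℂ) + y * I) = x - y * I := by simp [conj_ofReal, conj_I, sub_eq_add_neg]
  rw [hconj] at ha ⊢
  have hxy : (x : ℂ) * x + y * y = 1 := by linear_combination ha + y ^ 2 * I_sq
  have hDC : !![(x : ℂ) + y * I, 0; 0, x - y * I] * !![1, I; 1, -I] =
      !![1, I; 1, -I] * !![(x : ℂ), -y; y, x] := by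
    ext i j
    fin_cases i <;> fin_cases j <;> simp [Matrix.mul_apply, Fin.sum_univ_two] <;>
      first | linear_combination | linear_combination (y : ℂ) * I_sq
  rw [Matrix.mul_assoc, hDC, nonsing_inv_mul_cancel_left _ _ hC]
  refine ⟨?_, ?_, ?_⟩
  · intro i j
    fin_cases i <;> fin_cases j <;> simp
  · ext i j
    fin_cases i <;> fin_cases j <;> simp [Matrix.mul_apply, Fin.sum_univ_two] <;>
      first | linear_combination | linear_combination hxy
  · rw [det_fin_two_of]
    linear_combination hxy

theorem exists_upper_congr_diag {K : M₂} (hK : K.IsHermitian) (hp : K 0 0 ≠ 0) :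
    ∃ S : M₂, IsUnit S.det ∧ S 1 0 = 0 ∧ ∃ q, Sᴴ * K * S = !![K 0 0, 0; 0, q] := by
  have h00 : conj (K 0 0) = K 0 0 := hK.apply 0 0
  have h01 : conj (K 0 1) = K 1 0 := hK.apply 1 0
  refine ⟨!![1, -(K 0 1 / K 0 0); 0, 1], by simp [det_fin_two_of], rfl,
    K 1 1 - K 1 0 * K 0 1 / K 0 0, ?_⟩
  ext i j
  fin_cases i <;> fin_cases j <;>
    simp [Matrix.mul_apply, Fin.sum_univ_two, h00, h01] <;> field_simp <;> ring

theorem exists_upper_congr_hermitianJ {K : M₂} (hK : K.IsHermitian) (hdet : K.det ≠ 0)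
    (hp : K 0 0 = 0) : ∃ S : M₂, IsUnit S.det ∧ S 1 0 = 0 ∧ Sᴴ * K * S = hermitianJ := by
  have h01 : conj (K 0 1) = K 1 0 := hK.apply 1 0
  have h10 : conj (K 1 0) = K 0 1 := hK.apply 0 1
  have h11 : conj (K 1 1) = K 1 1 := hK.apply 1 1
  have hh : K 0 1 * K 1 0 ≠ 0 := by simpa [det_fin_two, hp] using hdet
  have hh0 : K 0 1 ≠ 0 := left_ne_zero_of_mul hh
  have hh1 : K 1 0 ≠ 0 := right_ne_zero_of_mul hh
  refine ⟨!![1, -(I * K 1 1) / (2 * (K 0 1 * K 1 0)); 0, I / K 0 1], ?_, rfl, ?_⟩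
  · simp [det_fin_two_of, I_ne_zero, hh0]
  ext i j
  fin_cases i <;> fin_cases j <;>
    simp [hermitianJ, Matrix.mul_apply, Fin.sum_univ_two, hp, h01, h10, h11, map_ofNat] <;>
    field_simp
  ring

theorem exists_conj_model_of_upper {𝓜 : Set M₂} {K : M₂} (hK : K.IsHermitian)
    (hKdet : K.det ≠ 0) (h𝓜 : ∀ M ∈ 𝓜, M 1 0 = 0 ∧ M.det = 1 ∧ Mᴴ * K * M = K) :
    ∃ S : M₂, IsUnit S.det ∧
      ((∀ M ∈ 𝓜, IsRealRotation (S⁻¹ * M * S)) ∨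
        ∀ M ∈ 𝓜, IsRealUpperTriangularSL (S⁻¹ * M * S)) := by
  by_cases hp : K 0 0 = 0
  · obtain ⟨S, hS, hS10, hSK⟩ := exists_upper_congr_hermitianJ hK hKdet hp
    refine ⟨S, hS, Or.inr fun M hM => ?_⟩
    obtain ⟨hM10, hMdet, hMK⟩ := h𝓜 M hM
    have hdet : (S⁻¹ * M * S).det = 1 := by
      rw [det_conj' ((isUnit_iff_isUnit_det S).2 hS), hMdet]
    have hJ := conjTranspose_conj'_mul_mul_conj' hS hMK
    rw [hSK] at hJ
    exact ⟨inv_mul_mul_apply_one_zero hS10 hM10,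
      (conjTranspose_mul_hermitianJ_mul_eq_iff hdet).1 hJ, hdet⟩
  · obtain ⟨S, hS, hS10, q, hSK⟩ := exists_upper_congr_diag hK hp
    obtain ⟨C, hC, hCrot⟩ := exists_conj_diag_isRealRotation
    refine ⟨S * C, by rw [det_mul]; exact hS.mul hC, Or.inl fun M hM => ?_⟩
    obtain ⟨hM10, hMdet, hMK⟩ := h𝓜 M hM
    have hdet : (S⁻¹ * M * S).det = 1 := by
      rw [det_conj' ((isUnit_iff_isUnit_det S).2 hS), hMdet]
    have hD := conjTranspose_conj'_mul_mul_conj' hS hMK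
    rw [hSK] at hD
    obtain ⟨hunit, hdiag⟩ := conj_mul_self_eq_one_and_eq_of_conjTranspose_mul_diag_mul hp
      (inv_mul_mul_apply_one_zero hS10 hM10) hdet hD
    rw [conj'_mul, hdiag]
    exact hCrot _ hunit

open scoped ComplexOrder in
theorem exists_isUnit_det_col_zero_eq {v : Fin 2 → ℂ} (hv : v ≠ 0) :
    ∃ P : M₂, IsUnit P.det ∧ P.col 0 = v := by
  refine ⟨!![v 0, -conj (v 1); v 1, conj (v 0)], ?_, ?_⟩
  · have hdet : (!![v 0, -conj (v 1); v 1, conj (v 0)] : M₂).det = v ⬝ᵥ star v := by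
      simp [det_fin_two_of, dotProduct, Fin.sum_univ_two]
      ring
    rw [hdet, isUnit_iff_ne_zero]
    exact dotProduct_self_star_eq_zero.not.2 hv
  · ext i
    fin_cases i <;> rfl

theorem exists_conj_upper_of_isReducibleSubgroup
    {G : Subgroup (Matrix.SpecialLinearGroup (Fin 2) ℂ)} (hred : IsReducibleSubgroup G) :
    ∃ P : M₂, IsUnit P.det ∧ ∀ g ∈ G, (P⁻¹ * (g : M₂) * P) 1 0 = 0 := by
  obtain ⟨v, hv, hvG⟩ := hred
  obtain ⟨P, hP, hPv⟩ := exists_isUnit_det_col_zero_eq hv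
  refine ⟨P, hP, fun g hg => ?_⟩
  obtain ⟨c, hc⟩ := hvG g hg
  exact inv_mul_mul_apply_eq_zero_of_mulVec_col hP (hPv ▸ hc) one_ne_zero

theorem isUnitarySubgroup_iff_conj {G : Subgroup (Matrix.SpecialLinearGroup (Fin 2) ℂ)}
    {P : M₂} (hP : IsUnit P.det) :
    IsUnitarySubgroup G ↔ ∃ K : M₂, K.IsHermitian ∧ K.det ≠ 0 ∧
      ∀ g ∈ G, (P⁻¹ * (g : M₂) * P)ᴴ * K * (P⁻¹ * (g : M₂) * P) = K := by
  constructor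
  · rintro ⟨H, hH, hHdet, hG⟩
    refine ⟨Pᴴ * H * P, isHermitian_conjTranspose_mul_mul P hH, ?_,
      fun g hg => conjTranspose_conj'_mul_mul_conj' hP (hG g hg)⟩
    simp [det_mul, det_conjTranspose, hHdet, hP.ne_zero]
  · rintro ⟨K, hK, hKdet, hG⟩
    have hP' := isUnit_nonsing_inv_det P hP
    refine ⟨P⁻¹ᴴ * K * P⁻¹, isHermitian_conjTranspose_mul_mul _ hK, ?_, fun g hg => ?_⟩
    · simp [det_mul, det_conjTranspose, hKdet, hP.ne_zero]
    · have hg' : P⁻¹⁻¹ * (P⁻¹ * (g : M₂) * P) * P⁻¹ = g := by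
        rw [nonsing_inv_nonsing_inv P hP, Matrix.mul_assoc, Matrix.mul_assoc,
          mul_nonsing_inv P hP, Matrix.mul_one, ← Matrix.mul_assoc, mul_nonsing_inv P hP,
          Matrix.one_mul]
      simpa only [hg'] using conjTranspose_conj'_mul_mul_conj' hP' (hG g hg)

/-- A reducible subgroup of `SL(2,ℂ)` is unitary iff it is conjugate to a subgroup of
`SO(2,ℝ)` or to a subgroup of the real upper-triangular matrices of determinant 1. -/
theorem reducible_unitary_iff_conj_model
    (G : Subgroup (Matrix.SpecialLinearGroup (Fin 2) ℂ))
    (hred : IsReducibleSubgroup G) :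
    IsUnitarySubgroup G ↔
      ∃ T : Matrix (Fin 2) (Fin 2) ℂ, IsUnit T.det ∧
        ((∀ g ∈ G,
            (∀ i j, ((T⁻¹ * (g : Matrix (Fin 2) (Fin 2) ℂ) * T) i j).im = 0) ∧
            (T⁻¹ * (g : Matrix (Fin 2) (Fin 2) ℂ) * T)ᵀ *
              (T⁻¹ * (g : Matrix (Fin 2) (Fin 2) ℂ) * T) = 1 ∧
            (T⁻¹ * (g : Matrix (Fin 2) (Fin 2) ℂ) * T).det = 1) ∨
         (∀ g ∈ G,
            (T⁻¹ * (g : Matrix (Fin 2) (Fin 2) ℂ) * T) 1 0 = 0 ∧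
            (∀ i j, ((T⁻¹ * (g : Matrix (Fin 2) (Fin 2) ℂ) * T) i j).im = 0) ∧
            (T⁻¹ * (g : Matrix (Fin 2) (Fin 2) ℂ) * T).det = 1)) := by
  obtain ⟨P, hP, hPupper⟩ := exists_conj_upper_of_isReducibleSubgroup hred
  constructor
  · intro hU
    obtain ⟨K, hK, hKdet, hKG⟩ := (isUnitarySubgroup_iff_conj hP).1 hU
    obtain ⟨S, hS, hmodel⟩ := exists_conj_model_of_upper
      (𝓜 := {M | ∃ g ∈ G, M = P⁻¹ * (g : M₂) * P}) hK hKdet (by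
        rintro _ ⟨g, hg, rfl⟩
        exact ⟨hPupper g hg, by rw [det_conj' ((isUnit_iff_isUnit_det P).2 hP),
          Matrix.SpecialLinearGroup.det_coe], hKG g hg⟩)
    refine ⟨P * S, by rw [det_mul]; exact hP.mul hS, ?_⟩
    simp only [conj'_mul]
    exact hmodel.imp (fun h g hg => h _ ⟨g, hg, rfl⟩) (fun h g hg => h _ ⟨g, hg, rfl⟩)
  · rintro ⟨T, hT, hrot | hborel⟩
    · refine (isUnitarySubgroup_iff_conj hT).2 ⟨1, isHermitian_one, by simp, fun g hg => ?_⟩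
      obtain ⟨hreal, horth, -⟩ := hrot g hg
      rw [Matrix.mul_one, (conjTranspose_eq_transpose_iff _).2 hreal, horth]
    · refine (isUnitarySubgroup_iff_conj hT).2
        ⟨hermitianJ, isHermitian_hermitianJ, by simp [det_hermitianJ], fun g hg => ?_⟩
      obtain ⟨-, hreal, hdet⟩ := hborel g hg
      exact (conjTranspose_mul_hermitianJ_mul_eq_iff hdet).2 hreal
end

section
/- Let G be a subgroup of GL(2,ℂ) and define the rescaled set G' = { h : h is a 2×2 complex matrix with det h = 1 and h = c • g for some g ∈ G and some c ∈ ℂ }. Then G is unitary if and only if |det g| = 1 for every g ∈ G and G' is unitary (with respect to some nondegenerate Hermitian form preserved by all elements of G'). -/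
open Matrix Complex

/-!
Taking determinants in `gᴴ H g = H` gives `|det g|² det H = det H`, so a unitary group has
`|det g| = 1`. Then every scalar `c` with `det (c • g) = 1` satisfies `|c| = 1`, and multiplying
by such a `c` does not change `gᴴ H g`; so `G` and `G'` preserve exactly the same forms.
-/

section

variable {n 𝕜 : Type*} [Fintype n] [DecidableEq n] [RCLike 𝕜]

theorem conjTranspose_smul_mul_mul_smul (c : 𝕜) (g H : Matrix n n 𝕜) :
    (c • g)ᴴ * H * (c • g) = ((‖c‖ : 𝕜) ^ 2) • (gᴴ * H * g) := by
  rw [conjTranspose_smul, smul_mul, smul_mul, mul_smul_comm, smul_smul, RCLike.star_def,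
    RCLike.conj_mul]

theorem conjTranspose_smul_mul_mul_smul_of_norm_eq_one {c : 𝕜} (hc : ‖c‖ = 1)
    (g H : Matrix n n 𝕜) : (c • g)ᴴ * H * (c • g) = gᴴ * H * g := by
  rw [conjTranspose_smul_mul_mul_smul, hc, RCLike.ofReal_one, one_pow, one_smul]

theorem norm_det_eq_one_of_conjTranspose_mul_mul_eq {g H : Matrix n n 𝕜} (hH : H.det ≠ 0)
    (hg : gᴴ * H * g = H) : ‖g.det‖ = 1 := by
  have hdet : (starRingEnd 𝕜) g.det * g.det * H.det = 1 * H.det := by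
    simpa only [det_mul, det_conjTranspose, RCLike.star_def, mul_right_comm _ H.det, one_mul]
      using congrArg det hg
  have hsq : ((‖g.det‖ ^ 2 : ℝ) : 𝕜) = 1 := by
    rw [RCLike.ofReal_pow, ← RCLike.conj_mul]
    exact mul_right_cancel₀ hH hdet
  exact (pow_eq_one_iff_of_nonneg (norm_nonneg _) two_ne_zero).mp (mod_cast hsq)

theorem norm_eq_one_of_det_smul_eq_one [Nonempty n] {g : Matrix n n 𝕜} (hg : ‖g.det‖ = 1)
    {c : 𝕜} (hc : (c • g).det = 1) : ‖c‖ = 1 := by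
  have hpow : ‖c‖ ^ Fintype.card n = 1 := by
    simpa only [det_smul, norm_mul, norm_pow, hg, mul_one, norm_one] using congrArg norm hc
  exact (pow_eq_one_iff_of_nonneg (norm_nonneg c) Fintype.card_ne_zero).mp hpow

end

theorem exists_det_smul_eq_one {n K : Type*} [Fintype n] [DecidableEq n] [Nonempty n] [Field K]
    [IsAlgClosed K] {g : Matrix n n K} (hg : g.det ≠ 0) : ∃ c : K, (c • g).det = 1 := by
  obtain ⟨c, hc⟩ := IsAlgClosed.exists_pow_nat_eq g.det⁻¹ (Fintype.card_pos (α := n))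
  exact ⟨c, by rw [det_smul, hc, inv_mul_cancel₀ hg]⟩

/-- A subgroup `G ⊆ GL(2,ℂ)` is unitary iff all its elements have determinant of absolute
value 1 and its rescaled group `G' = {± g / √(det g)} ⊆ SL(2,ℂ)` is unitary. -/
theorem unitary_iff_rescaled_unitary (G : Subgroup (GL (Fin 2) ℂ)) :
    IsUnitaryMatrixGroup {m : Matrix (Fin 2) (Fin 2) ℂ | ∃ g ∈ G, (g : Matrix (Fin 2) (Fin 2) ℂ) = m} ↔
      ((∀ g ∈ G, ‖((g : Matrix (Fin 2) (Fin 2) ℂ)).det‖ = 1) ∧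
        IsUnitaryMatrixGroup {h : Matrix (Fin 2) (Fin 2) ℂ | h.det = 1 ∧
          ∃ g ∈ G, ∃ c : ℂ, h = c • (g : Matrix (Fin 2) (Fin 2) ℂ)}) := by
  constructor
  · rintro ⟨H, hH, hdet, hfix⟩
    have hnorm : ∀ g ∈ G, ‖((g : Matrix (Fin 2) (Fin 2) ℂ)).det‖ = 1 := fun g hg =>
      norm_det_eq_one_of_conjTranspose_mul_mul_eq hdet (hfix _ ⟨g, hg, rfl⟩)
    refine ⟨hnorm, H, hH, hdet, ?_⟩
    rintro _ ⟨hdet1, g, hg, c, rfl⟩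
    rw [conjTranspose_smul_mul_mul_smul_of_norm_eq_one
      (norm_eq_one_of_det_smul_eq_one (hnorm g hg) hdet1)]
    exact hfix _ ⟨g, hg, rfl⟩
  · rintro ⟨hnorm, H, hH, hdet, hfix⟩
    refine ⟨H, hH, hdet, ?_⟩
    rintro _ ⟨g, hg, rfl⟩
    obtain ⟨c, hc⟩ := exists_det_smul_eq_one (isUnits_det_units g).ne_zero
    rw [← conjTranspose_smul_mul_mul_smul_of_norm_eq_one
      (norm_eq_one_of_det_smul_eq_one (hnorm g hg) hc)]
    exact hfix _ ⟨hc, g, hg, c, rfl⟩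
end

section
/- Let G be a subgroup of SL(2,ℂ) whose natural action on ℂ² is irreducible. Then G is unitary if and only if the ℝ-subalgebra A of the 2×2 complex matrices generated by G has real dimension 4. -/
/-!
By Burnside's theorem (Schur's lemma plus Jacobson density) the complex span of an irreducible
`G` is all of `M₂(ℂ)`, so the real algebra `A` spanned by `G` has real dimension at least 4.

If `G` preserves a nondegenerate form `H`, then since `det g = 1` it lies in the real algebra
`{x | xᴴ H = H adj x}`, which meets its multiple by `i` only in `0` and so has dimension at most 4.

Conversely, if `dim A = 4`, a real basis of `A` is a complex basis of `M₂(ℂ)`, so the real-linear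
multiplicative map `x ↦ (adj x)ᴴ` (which is `g ↦ (g⁻¹)ᴴ` on `G`) extends to a complex algebra
endomorphism `φ` of `M₂(ℂ)`. As in the proof of Skolem–Noether, `φ` is intertwined with the
identity by some `H ≠ 0`, i.e. `gᴴ H g = H` on `G`. The Hermitian or the skew-Hermitian part of
`H` is a nonzero invariant Hermitian form, nondegenerate because its kernel is `G`-invariant.
-/

open Matrix Complex

open Module Submodule

section Tower

variable {K L E : Type*} [Field K] [Field L] [Algebra K L] [AddCommGroup E] [Module K E]
  [Module L E] [IsScalarTower K L E]

theorem span_range_subtype_basis {ι : Type*} (V : Submodule K E) (b : Basis ι K V) :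
    span L (Set.range ((↑) ∘ b : ι → E)) = span L (V : Set E) := by
  rw [← span_span_of_tower K, Set.range_comp, ← V.coe_subtype, span_image, b.span_eq,
    map_subtype_top]

theorem finrank_le_finrank_of_span_eq_top (V : Submodule K E) [FiniteDimensional K V]
    (hV : span L (V : Set E) = ⊤) : finrank L E ≤ finrank K V := by
  rw [← finrank_top L E, ← hV, ← span_range_subtype_basis V (finBasis K V)]
  exact (finrank_range_le_card _).trans (Fintype.card_fin _).le

theorem linearIndependent_subtype_basis_of_finrank_eq {ι : Type*} [Fintype ι]
    (V : Submodule K E) (b : Basis ι K V) (hV : span L (V : Set E) = ⊤)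
    (hdim : finrank K V = finrank L E) : LinearIndependent L ((↑) ∘ b : ι → E) :=
  linearIndependent_of_top_le_span_of_card_eq_finrank
    (by rw [span_range_subtype_basis, hV]) (by rw [← hdim, finrank_eq_card_basis b])

theorem exists_linearMap_eqOn_of_finrank_eq (V : Submodule K E) [FiniteDimensional K V]
    (hV : span L (V : Set E) = ⊤) (hdim : finrank K V = finrank L E)
    {F : Type*} [AddCommGroup F] [Module K F] [Module L F] [IsScalarTower K L F]
    (f : E →ₗ[K] F) : ∃ g : E →ₗ[L] F, Set.EqOn g f V := by
  let b := finBasis K V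
  let c := Basis.mk (linearIndependent_subtype_basis_of_finrank_eq V b hV hdim)
    (by rw [span_range_subtype_basis, hV])
  let g : E →ₗ[L] F := c.constr L fun i => f (b i)
  have hg : g.restrictScalars K ∘ₗ V.subtype = f ∘ₗ V.subtype := b.ext fun i => by
    have := c.constr_basis L (fun i => f (b i)) i
    rwa [Basis.mk_apply] at this
  exact ⟨g, fun v hv => congr($hg ⟨v, hv⟩)⟩

theorem span_adjoin_eq_top_of_adjoin_eq_top {A : Type*} [Ring A] [Algebra K A] [Algebra L A]
    [IsScalarTower K L A] {s : Set A} (hs : Algebra.adjoin L s = ⊤) :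
    span L (Algebra.adjoin K s : Set A) = ⊤ := by
  rw [eq_top_iff, ← Algebra.top_toSubmodule, ← hs, Algebra.adjoin_eq_span]
  exact span_mono (Submonoid.closure_le (S := (Algebra.adjoin K s).toSubmonoid) |>.2
    Algebra.subset_adjoin)

end Tower

theorem finrank_real_le_of_smul_I_mem {E : Type*} [AddCommGroup E] [Module ℂ E] [Module ℝ E]
    [IsScalarTower ℝ ℂ E] [FiniteDimensional ℂ E] (V : Submodule ℝ E)
    (hV : ∀ x ∈ V, I • x ∈ V → x = 0) : finrank ℝ V ≤ finrank ℂ E := by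
  have : FiniteDimensional ℝ E := Module.Finite.trans ℂ E
  let e : E ≃ₗ[ℝ] E := (LinearEquiv.smulOfNeZero ℂ E I I_ne_zero).restrictScalars ℝ
  have hinf : V ⊓ V.map e.toLinearMap = ⊥ := by
    rw [eq_bot_iff]
    rintro _ ⟨hxV, x, hx, rfl⟩
    simp [hV x hx hxV]
  have h := finrank_sup_add_finrank_inf_eq V (V.map e.toLinearMap)
  rw [hinf, finrank_bot, LinearEquiv.finrank_map_eq] at h
  have := (V ⊔ V.map e.toLinearMap).finrank_le
  rw [← Module.finrank_mul_finrank ℝ ℂ E, Complex.finrank_real_complex] at this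
  omega

theorem LinearMap.map_mul_of_span_eq_top {R A B : Type*} [CommSemiring R]
    [NonUnitalNonAssocSemiring A] [Module R A] [SMulCommClass R A A] [IsScalarTower R A A]
    [NonUnitalNonAssocSemiring B] [Module R B] [SMulCommClass R B B] [IsScalarTower R B B]
    (f : A →ₗ[R] B) {s : Set A} (hs : span R s = ⊤)
    (hf : ∀ x ∈ s, ∀ y ∈ s, f (x * y) = f x * f y) (x y : A) : f (x * y) = f x * f y := by
  have hleft : ∀ x ∈ s, ∀ y, f (x * y) = f x * f y := fun x hx =>
    LinearMap.congr_fun (LinearMap.ext_on (f := f ∘ₗ LinearMap.mulLeft R x)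
      (g := LinearMap.mulLeft R (f x) ∘ₗ f) hs (hf x hx))
  exact LinearMap.congr_fun (LinearMap.ext_on (f := f ∘ₗ LinearMap.mulRight R y)
    (g := LinearMap.mulRight R (f y) ∘ₗ f) hs fun x hx => hleft x hx y) x

theorem Submodule.exists_isSelfAdjoint_ne_zero {A : Type*} [AddCommGroup A] [Module ℂ A]
    [StarAddMonoid A] [StarModule ℂ A] (p : Submodule ℂ A) (hp : ∀ x ∈ p, star x ∈ p) {x : A}
    (hx : x ∈ p) (hx0 : x ≠ 0) : ∃ y ∈ p, IsSelfAdjoint y ∧ y ≠ 0 := by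
  have hre : (realPart x : A) ∈ p := by
    rw [realPart_apply_coe]
    exact p.smul_of_tower_mem _ (p.add_mem hx (hp x hx))
  have him : (imaginaryPart x : A) ∈ p := by
    rw [imaginaryPart_apply_coe]
    exact p.smul_mem _ (p.smul_of_tower_mem _ (p.sub_mem hx (hp x hx)))
  by_cases h : (realPart x : A) = 0
  · refine ⟨imaginaryPart x, him, (imaginaryPart x).2, fun h' => hx0 ?_⟩
    rw [← realPart_add_I_smul_imaginaryPart x, h, h', smul_zero, add_zero]
  · exact ⟨realPart x, hre, (realPart x).2, h⟩

theorem Algebra.adjoin_eq_top_of_invariant_eq_bot_or_top {K V : Type*} [Field K] [IsAlgClosed K]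
    [AddCommGroup V] [Module K V] [FiniteDimensional K V] [Nontrivial V] (S : Set (End K V))
    (hS : ∀ p : Submodule K V, (∀ f ∈ S, ∀ v ∈ p, f v ∈ p) → p = ⊥ ∨ p = ⊤) :
    Algebra.adjoin K S = ⊤ := by
  set A := Algebra.adjoin K S
  have : IsSimpleModule A V := by
    refine { eq_bot_or_eq_top := fun q => ?_ }
    have hq := hS (q.restrictScalars K) fun f hf v hv =>
      q.smul_mem (⟨f, Algebra.subset_adjoin hf⟩ : A) hv
    simpa [restrictScalars_eq_bot_iff, restrictScalars_eq_top_iff] using hq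
  have hschur := IsSimpleModule.algebraMap_end_bijective_of_isAlgClosed (A := A) (V := V) K
  have : Module.Finite (End A V) V := Module.Finite.of_restrictScalars_finite K _ _
  refine Algebra.eq_top_iff.2 fun f => ?_
  let F : End (End A V) V :=
    { toFun := f
      map_add' := f.map_add
      map_smul' := fun ψ m => by
        obtain ⟨c, rfl⟩ := hschur.2 ψ
        simp }
  obtain ⟨a, ha⟩ := Module.Finite.toModuleEnd_moduleEnd_surjective F
  rw [show f = a from LinearMap.ext fun m => congr($ha m).symm]
  exact a.2

theorem Matrix.adjoin_eq_top_of_invariant_eq_bot_or_top {K n : Type*} [Field K] [IsAlgClosed K]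
    [Fintype n] [DecidableEq n] [Nonempty n] (S : Set (Matrix n n K))
    (hS : ∀ p : Submodule K (n → K), (∀ g ∈ S, ∀ v ∈ p, g *ᵥ v ∈ p) → p = ⊥ ∨ p = ⊤) :
    Algebra.adjoin K S = ⊤ := by
  have h := Algebra.adjoin_eq_top_of_invariant_eq_bot_or_top (toLinAlgEquiv' '' S) fun p hp =>
    hS p fun g hg v hv => hp _ ⟨g, hg, rfl⟩ v hv
  refine Algebra.eq_top_iff.2 fun x => ?_
  have hx : toLinAlgEquiv' x ∈ (Algebra.adjoin K S).map toLinAlgEquiv'.toAlgHom := by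
    rw [← Algebra.adjoin_image]
    simp [h]
  obtain ⟨y, hy, hyx⟩ := hx
  rwa [← toLinAlgEquiv'.injective hyx]

theorem Matrix.mul_single_one_eq_sum {R n : Type*} [CommRing R] [Fintype n] [DecidableEq n]
    (x : Matrix n n R) (j b : n) : x * single j b 1 = ∑ i, x i j • single i b 1 := by
  ext p q
  simp [Matrix.mul_apply, Matrix.sum_apply, Matrix.single_apply, ite_and]

/-- Skolem–Noether for matrix algebras: column `j` of the intertwiner `H a b` is column `a` of
`φ (single j b 1)`. -/
theorem Matrix.exists_ne_zero_map_mul_eq_mul {R n : Type*} [CommRing R] [Fintype n]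
    [DecidableEq n] (φ : Matrix n n R →ₗ[R] Matrix n n R) (hmul : ∀ x y, φ (x * y) = φ x * φ y)
    (hφ : φ ≠ 0) : ∃ H ≠ 0, ∀ x, φ x * H = H * x := by
  let H (a b : n) : Matrix n n R := of fun p j => φ (single j b 1) p a
  have hH : ∀ a b x, φ x * H a b = H a b * x := by
    intro a b x
    ext p j
    have := congr($(hmul x (single j b 1)) p a)
    rw [mul_single_one_eq_sum, map_sum] at this
    simp only [map_smul, Matrix.sum_apply, Matrix.smul_apply, smul_eq_mul] at this
    simpa [H, Matrix.mul_apply, mul_comm] using this.symm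
  suffices ∃ a b, H a b ≠ 0 from
    let ⟨a, b, h⟩ := this
    ⟨H a b, h, hH a b⟩
  by_contra! h
  refine hφ (Matrix.ext_linearMap R fun j b => LinearMap.ext_ring ?_)
  ext p a
  simpa [H] using congr($(h a b) p j)

def invariantForms {n : Type*} [Fintype n] (S : Set (Matrix n n ℂ)) :
    Submodule ℂ (Matrix n n ℂ) where
  carrier := {H | ∀ g ∈ S, gᴴ * H * g = H}
  add_mem' {H K} hH hK g hg := by rw [mul_add, add_mul, hH g hg, hK g hg]
  zero_mem' := by simp
  smul_mem' c H hH g hg := by rw [Matrix.mul_smul, Matrix.smul_mul, hH g hg]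

theorem star_mem_invariantForms {n : Type*} [Fintype n] {S : Set (Matrix n n ℂ)}
    {H : Matrix n n ℂ} (hH : H ∈ invariantForms S) : star H ∈ invariantForms S := fun g hg => by
  rw [star_eq_conjTranspose, ← conjTranspose_conjTranspose g, ← conjTranspose_mul,
    ← conjTranspose_mul, conjTranspose_conjTranspose, ← mul_assoc, hH g hg]

theorem Matrix.adjugate_add_fin_two {R : Type*} [CommRing R] (x y : Matrix (Fin 2) (Fin 2) R) :
    adjugate (x + y) = adjugate x + adjugate y := by
  simp only [adjugate_fin_two]
  ext i j
  fin_cases i <;> fin_cases j <;> simp [add_comm]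

theorem Matrix.adjugate_real_smul_fin_two (r : ℝ) (x : Matrix (Fin 2) (Fin 2) ℂ) :
    adjugate (r • x) = r • adjugate x := by
  simp only [adjugate_fin_two]
  ext i j
  fin_cases i <;> fin_cases j <;> simp

/-- On `SL(2,ℂ)` this is `g ↦ (g⁻¹)ᴴ`; it is real-linear because the `2 × 2` adjugate is
linear. -/
noncomputable def adjugateConjTranspose :
    Matrix (Fin 2) (Fin 2) ℂ →ₗ[ℝ] Matrix (Fin 2) (Fin 2) ℂ where
  toFun x := (adjugate x)ᴴ
  map_add' x y := by rw [adjugate_add_fin_two, conjTranspose_add]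
  map_smul' r x := by simp [adjugate_real_smul_fin_two, conjTranspose_smul]

theorem adjugateConjTranspose_one : adjugateConjTranspose 1 = 1 := by
  simp [adjugateConjTranspose]

theorem adjugateConjTranspose_mul (x y : Matrix (Fin 2) (Fin 2) ℂ) :
    adjugateConjTranspose (x * y) = adjugateConjTranspose x * adjugateConjTranspose y := by
  simp [adjugateConjTranspose, adjugate_mul_distrib]

/-- For `det x = 1` the defining condition says that `x` preserves the form `H`. -/
def adjointEqAdjugate (H : Matrix (Fin 2) (Fin 2) ℂ) :
    Subalgebra ℝ (Matrix (Fin 2) (Fin 2) ℂ) where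
  carrier := {x | xᴴ * H = H * adjugate x}
  mul_mem' {x y} hx hy := by
    simp only [Set.mem_ofPred_eq] at *
    rw [conjTranspose_mul, mul_assoc, hx, ← mul_assoc, hy, mul_assoc, adjugate_mul_distrib]
  add_mem' {x y} hx hy := by
    simp only [Set.mem_ofPred_eq] at *
    rw [conjTranspose_add, add_mul, hx, hy, adjugate_add_fin_two, mul_add]
  algebraMap_mem' r := by
    simp [Algebra.algebraMap_eq_smul_one, adjugate_real_smul_fin_two, conjTranspose_smul]

theorem mem_adjointEqAdjugate {H g : Matrix (Fin 2) (Fin 2) ℂ} (hg : g.det = 1)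
    (hH : gᴴ * H * g = H) : g ∈ adjointEqAdjugate H := by
  show gᴴ * H = H * adjugate g
  rw [← hH, mul_assoc _ g, mul_adjugate, hg, one_smul, mul_one, hH]

theorem eq_zero_of_mem_adjointEqAdjugate {H x : Matrix (Fin 2) (Fin 2) ℂ} (hH : H.det ≠ 0)
    (hx : x ∈ adjointEqAdjugate H) (hIx : I • x ∈ adjointEqAdjugate H) : x = 0 := by
  change xᴴ * H = H * adjugate x at hx
  change (I • x)ᴴ * H = H * adjugate (I • x) at hIx
  rw [conjTranspose_smul, adjugate_smul, smul_mul, hx] at hIx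
  simp only [RCLike.star_def, conj_I, neg_smul, Fintype.card_fin, Nat.add_one_sub_one, pow_one,
    Algebra.mul_smul_comm] at hIx
  have h2I : (2 * I) • (H * adjugate x) = 0 := by linear_combination (norm := module) -hIx
  have hadj : adjugate x = 0 := by
    simpa [hH] using congr(H⁻¹ * $((smul_eq_zero.1 h2I).resolve_left (by simp)))
  simpa [hadj] using (adjugate_adjugate' x).symm

theorem finrank_adjointEqAdjugate_le {H : Matrix (Fin 2) (Fin 2) ℂ} (hH : H.det ≠ 0) :
    finrank ℝ (adjointEqAdjugate H) ≤ 4 := by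
  have := finrank_real_le_of_smul_I_mem (Subalgebra.toSubmodule (adjointEqAdjugate H))
    fun x hx hIx => eq_zero_of_mem_adjointEqAdjugate hH hx hIx
  simpa [Module.finrank_matrix] using this

section DeterminantOne

variable {S : Set (Matrix (Fin 2) (Fin 2) ℂ)} (hS : ∀ g ∈ S, g.det = 1)
include hS

theorem mem_invariantForms_of_adjugateConjTranspose_mul {H : Matrix (Fin 2) (Fin 2) ℂ}
    (hH : ∀ g ∈ S, adjugateConjTranspose g * H = H * g) : H ∈ invariantForms S := fun g hg => by
  have hinv : gᴴ * adjugateConjTranspose g = 1 := by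
    simp [adjugateConjTranspose, ← conjTranspose_mul, adjugate_mul, hS g hg]
  rw [mul_assoc, ← hH g hg, ← mul_assoc, hinv, one_mul]

theorem finrank_adjoin_le_four {H : Matrix (Fin 2) (Fin 2) ℂ} (hH : H.det ≠ 0)
    (hHS : H ∈ invariantForms S) : finrank ℝ (Algebra.adjoin ℝ S) ≤ 4 := by
  have hA : Algebra.adjoin ℝ S ≤ adjointEqAdjugate H :=
    Algebra.adjoin_le fun g hg => mem_adjointEqAdjugate (hS g hg) (hHS g hg)
  exact (Submodule.finrank_mono (Subalgebra.toSubmodule.monotone hA)).trans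
    (finrank_adjointEqAdjugate_le hH)

theorem exists_ne_zero_mem_invariantForms
    (hspan : span ℂ (Algebra.adjoin ℝ S : Set (Matrix (Fin 2) (Fin 2) ℂ)) = ⊤)
    (h4 : finrank ℝ (Algebra.adjoin ℝ S) = 4) : ∃ H ∈ invariantForms S, H ≠ 0 := by
  set A := Algebra.adjoin ℝ S
  obtain ⟨φ, hφ⟩ := exists_linearMap_eqOn_of_finrank_eq (Subalgebra.toSubmodule A) hspan
    (by simpa [Module.finrank_matrix] using h4) adjugateConjTranspose
  have hmul := LinearMap.map_mul_of_span_eq_top φ hspan fun x hx y hy => by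
    rw [hφ (A.mul_mem hx hy), hφ hx, hφ hy, adjugateConjTranspose_mul]
  have hφ0 : φ ≠ 0 := fun h => one_ne_zero <| by
    rw [← adjugateConjTranspose_one, ← hφ A.one_mem, h, LinearMap.zero_apply]
  obtain ⟨H, hH0, hint⟩ := Matrix.exists_ne_zero_map_mul_eq_mul φ hmul hφ0
  refine ⟨H, mem_invariantForms_of_adjugateConjTranspose_mul hS fun g hg => ?_, hH0⟩
  rw [← hint, hφ (Algebra.subset_adjoin hg)]

end DeterminantOne

namespace IsIrreducibleSubgroup

variable {G : Subgroup (Matrix.SpecialLinearGroup (Fin 2) ℂ)}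

theorem eq_bot_or_eq_top (hG : IsIrreducibleSubgroup G) {p : Submodule ℂ (Fin 2 → ℂ)}
    (hp : ∀ g ∈ G, ∀ v ∈ p, (g : Matrix (Fin 2) (Fin 2) ℂ) *ᵥ v ∈ p) : p = ⊥ ∨ p = ⊤ := by
  by_contra! h
  obtain ⟨v, hvp, hv0⟩ := p.exists_mem_ne_zero_of_ne_bot h.1
  have hrank : finrank ℂ p = 1 := by
    have hlt := Submodule.finrank_lt h.2
    have hne := Submodule.finrank_eq_zero.not.2 h.1
    rw [finrank_fin_fun] at hlt
    omega
  refine hG ⟨v, hv0, fun g hg => ?_⟩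
  obtain ⟨c, hc⟩ := (finrank_eq_one_iff_of_nonzero' (⟨v, hvp⟩ : p) (by simpa using hv0)).1 hrank
    ⟨_, hp g hg v hvp⟩
  exact ⟨c, by simpa using congr(($hc : Fin 2 → ℂ)).symm⟩

theorem det_ne_zero (hG : IsIrreducibleSubgroup G) {H : Matrix (Fin 2) (Fin 2) ℂ}
    (hH : ∀ g ∈ G, (g : Matrix (Fin 2) (Fin 2) ℂ)ᴴ * H * g = H) (hH0 : H ≠ 0) : H.det ≠ 0 := by
  intro hdet
  have hker : ∀ g ∈ G, ∀ v ∈ LinearMap.ker H.mulVecLin,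
      (g : Matrix (Fin 2) (Fin 2) ℂ) *ᵥ v ∈ LinearMap.ker H.mulVecLin := by
    intro g hg v hv
    have hinv : ((g⁻¹ : Matrix.SpecialLinearGroup (Fin 2) ℂ) : Matrix (Fin 2) (Fin 2) ℂ) * g = 1 :=
      by simp [adjugate_mul]
    rw [LinearMap.mem_ker, mulVecLin_apply] at hv ⊢
    rw [← hH g⁻¹ (G.inv_mem hg), mulVec_mulVec, mul_assoc, hinv, mul_one, ← mulVec_mulVec, hv,
      mulVec_zero]
  rcases hG.eq_bot_or_eq_top hker with h | h
  · obtain ⟨v, hv0, hv⟩ := Matrix.exists_mulVec_eq_zero_iff.2 hdet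
    have hvker : v ∈ LinearMap.ker H.mulVecLin := hv
    rw [h] at hvker
    exact hv0 ((Submodule.mem_bot ℂ).1 hvker)
  · refine hH0 (Matrix.ext fun i j => ?_)
    simpa using congr($(LinearMap.ker_eq_top.1 h) (Pi.single j 1) i)

end IsIrreducibleSubgroup

/-- An irreducible subgroup of `SL(2,ℂ)` is unitary iff the real algebra it generates has
dimension 4. -/
theorem irreducible_unitary_iff_dim_four
    (G : Subgroup (Matrix.SpecialLinearGroup (Fin 2) ℂ))
    (hirr : IsIrreducibleSubgroup G) :
    IsUnitarySubgroup G ↔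
      Module.finrank ℝ
        (Algebra.adjoin ℝ
          ((fun g : Matrix.SpecialLinearGroup (Fin 2) ℂ => (g : Matrix (Fin 2) (Fin 2) ℂ)) ''
            (G : Set (Matrix.SpecialLinearGroup (Fin 2) ℂ)))) = 4 := by
  set S := (fun g : Matrix.SpecialLinearGroup (Fin 2) ℂ => (g : Matrix (Fin 2) (Fin 2) ℂ)) ''
    (G : Set (Matrix.SpecialLinearGroup (Fin 2) ℂ))
  have hS : ∀ g ∈ S, g.det = 1 := by
    rintro _ ⟨g, -, rfl⟩
    exact g.2
  have hGS (H) : H ∈ invariantForms S ↔ ∀ g ∈ G, (g : Matrix (Fin 2) (Fin 2) ℂ)ᴴ * H * g = H :=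
    Set.forall_mem_image
  have hspan : span ℂ (Algebra.adjoin ℝ S : Set (Matrix (Fin 2) (Fin 2) ℂ)) = ⊤ :=
    span_adjoin_eq_top_of_adjoin_eq_top <| Matrix.adjoin_eq_top_of_invariant_eq_bot_or_top S
      fun p hp => hirr.eq_bot_or_eq_top fun g hg => hp g ⟨g, hg, rfl⟩
  have hlower : 4 ≤ finrank ℝ (Algebra.adjoin ℝ S) := by
    simpa [Module.finrank_matrix] using
      finrank_le_finrank_of_span_eq_top (Subalgebra.toSubmodule (Algebra.adjoin ℝ S)) hspan
  constructor
  · rintro ⟨H, -, hH, hHG⟩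
    exact le_antisymm (finrank_adjoin_le_four hS hH ((hGS H).2 hHG)) hlower
  · intro h4
    obtain ⟨H₀, hH₀S, hH₀⟩ := exists_ne_zero_mem_invariantForms hS hspan h4
    obtain ⟨H, hHS, hHsa, hH0⟩ :=
      (invariantForms S).exists_isSelfAdjoint_ne_zero (fun _ => star_mem_invariantForms) hH₀S hH₀
    exact ⟨H, hHsa, hirr.det_ne_zero ((hGS H).1 hHS) hH0, (hGS H).1 hHS⟩
end

section
/- Let G be a subgroup of SL(2,ℂ) whose natural action on ℂ² is irreducible. Then G is unitary if and only if there exists an invertible 2×2 complex matrix T such that either (a) for every g ∈ G all entries of T⁻¹ g T are real (G is conjugate to a subgroup of SL(2,ℝ)), or (b) for every g ∈ G the matrix T⁻¹ g T lies in SU(2), i.e., (T⁻¹ g T)ᴴ (T⁻¹ g T) = 1. -/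
open Matrix Complex

/-!
By Sylvester's law of inertia a nondegenerate Hermitian form on `ℂ²` is congruent to `1`, `-1`
or `I • J` with `J = !![0, 1; -1, 0]`. Preserving `±1` is being unitary. Every `2 × 2` matrix
satisfies `mᵀ * J * m = det m • J`, so a matrix of determinant one preserves `I • J` exactly when
`mᴴ = mᵀ`, i.e. when it is real. Conversely a conjugate of a subgroup of `SU(2)` or `SL(2,ℝ)`
preserves the pull-back of `1` or of `I • J`.
-/

theorem Real.inv_sqrt_abs_mul_mul_inv_sqrt_abs_eq_sign {r : ℝ} (hr : r ≠ 0) :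
    (√|r|)⁻¹ * r * (√|r|)⁻¹ = Real.sign r := by
  calc (√|r|)⁻¹ * r * (√|r|)⁻¹ = r / (√|r| * √|r|) := by ring
    _ = r / |r| := by rw [Real.mul_self_sqrt (abs_nonneg r)]
    _ = Real.sign r := by
      rcases hr.lt_or_gt with hneg | hpos
      · rw [Real.sign_of_neg hneg, abs_of_neg hneg, div_neg, div_self hr]
      · rw [Real.sign_of_pos hpos, abs_of_pos hpos, div_self hr]

namespace Matrix

variable {n : Type*} [Fintype n]

theorem IsHermitian.exists_conjTranspose_mul_mul_eq_diagonal_sign [DecidableEq n]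
    {𝕜 : Type*} [RCLike 𝕜] {H : Matrix n n 𝕜} (hH : H.IsHermitian) (hdet : H.det ≠ 0) :
    ∃ S : Matrix n n 𝕜, IsUnit S.det ∧ ∃ ε : n → ℝ, (∀ i, ε i = -1 ∨ ε i = 1) ∧
      Sᴴ * H * S = diagonal fun i => (ε i : 𝕜) := by
  set U : Matrix n n 𝕜 := (hH.eigenvectorUnitary : Matrix n n 𝕜)
  set ev := hH.eigenvalues
  have hev : ∀ i, ev i ≠ 0 := by
    intro i hi
    apply hdet
    rw [hH.det_eq_prod_eigenvalues]
    exact Finset.prod_eq_zero (Finset.mem_univ i) (by simp [ev, hi])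
  have hUHU : Uᴴ * H * U = diagonal fun i => (ev i : 𝕜) := by
    have h := hH.conjStarAlgAut_star_eigenvectorUnitary
    rwa [Unitary.conjStarAlgAut_star_apply, star_eq_conjTranspose] at h
  set D : Matrix n n 𝕜 := diagonal fun i => ((√|ev i|)⁻¹ : ℝ)
  refine ⟨U * D, ?_, fun i => Real.sign (ev i),
    fun i => Real.sign_apply_eq_of_ne_zero _ (hev i), ?_⟩
  · rw [det_mul]
    exact (UnitaryGroup.det_isUnit _).mul (by simp [D, Finset.prod_ne_zero_iff, hev])
  · have hD : Dᴴ = D := by simp [D]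
    calc (U * D)ᴴ * H * (U * D) = D * (Uᴴ * H * U) * D := by
          simp only [conjTranspose_mul, hD, Matrix.mul_assoc]
      _ = _ := by
        rw [hUHU, diagonal_mul_diagonal, diagonal_mul_diagonal]
        congr 1
        funext i
        dsimp only
        rw [← Real.inv_sqrt_abs_mul_mul_inv_sqrt_abs_eq_sign (hev i)]
        push_cast
        ring

theorem conjTranspose_mul_smul_mul_eq_smul_iff {K : Type*} [Field K] [StarRing K] {c : K}
    (hc : c ≠ 0) (m E : Matrix n n K) : mᴴ * (c • E) * m = c • E ↔ mᴴ * E * m = E := by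
  rw [Matrix.mul_smul, Matrix.smul_mul]
  exact (smul_right_injective _ hc).eq_iff

section Conjugation

variable [DecidableEq n] {R : Type*} [CommRing R]

theorem det_inv_mul_coe_mul_eq_one {T : Matrix n n R} (hT : IsUnit T.det)
    (g : SpecialLinearGroup n R) : (T⁻¹ * (g : Matrix n n R) * T).det = 1 := by
  rw [det_conj' ((isUnit_iff_isUnit_det T).2 hT)]
  exact g.2

theorem conjTranspose_mul_mul_eq_self_conj_iff [StarRing R] {T H E : Matrix n n R}
    (hT : IsUnit T.det) (hE : Tᴴ * H * T = E) (g : Matrix n n R) :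
    (T⁻¹ * g * T)ᴴ * E * (T⁻¹ * g * T) = E ↔ gᴴ * H * g = H := by
  have hTH : IsUnit Tᴴ.det := by rw [det_conjTranspose]; exact hT.star
  subst hE
  calc (T⁻¹ * g * T)ᴴ * (Tᴴ * H * T) * (T⁻¹ * g * T) = Tᴴ * H * T
      ↔ Tᴴ * (gᴴ * H * g) * T = Tᴴ * H * T := by
        rw [conjTranspose_mul, conjTranspose_mul, conjTranspose_nonsing_inv]
        simp only [Matrix.mul_assoc, mul_nonsing_inv_cancel_left _ _ hT]
        rw [← Matrix.mul_assoc (Tᴴ)⁻¹, nonsing_inv_mul _ hTH, Matrix.one_mul]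
    _ ↔ gᴴ * H * g = H := by
        rw [((isUnit_iff_isUnit_det T).2 hT).mul_left_inj,
          ((isUnit_iff_isUnit_det _).2 hTH).mul_right_inj]

end Conjugation

def symplecticForm (R : Type*) [CommRing R] : Matrix (Fin 2) (Fin 2) R := !![0, 1; -1, 0]

theorem transpose_mul_symplecticForm_mul {R : Type*} [CommRing R] (A : Matrix (Fin 2) (Fin 2) R) :
    Aᵀ * symplecticForm R * A = A.det • symplecticForm R := by
  rw [det_fin_two]
  ext i j
  fin_cases i <;> fin_cases j <;> simp [symplecticForm, mul_apply, Fin.sum_univ_two] <;> ring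

theorem conjTranspose_mul_symplecticForm_mul_eq_iff {m : Matrix (Fin 2) (Fin 2) ℂ}
    (hm : m.det = 1) :
    mᴴ * symplecticForm ℂ * m = symplecticForm ℂ ↔ ∀ i j, (m i j).im = 0 := by
  have hmT : mᵀ * symplecticForm ℂ * m = symplecticForm ℂ := by
    rw [transpose_mul_symplecticForm_mul, hm, one_smul]
  have hJm : IsUnit (symplecticForm ℂ * m) :=
    (isUnit_iff_isUnit_det _).2 (by rw [det_mul, hm, mul_one]; simp [symplecticForm])
  calc mᴴ * symplecticForm ℂ * m = symplecticForm ℂ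
      ↔ mᴴ * (symplecticForm ℂ * m) = mᵀ * (symplecticForm ℂ * m) := by
        rw [← Matrix.mul_assoc, ← Matrix.mul_assoc, hmT]
    _ ↔ mᴴ = mᵀ := hJm.mul_left_inj
    _ ↔ ∀ i j, (m i j).im = 0 := by
        simp only [← Matrix.ext_iff, conjTranspose_apply, transpose_apply, RCLike.star_def,
          conj_eq_iff_im]
        exact forall_comm

theorem isHermitian_I_smul_symplecticForm : (I • symplecticForm ℂ).IsHermitian := by
  ext i j
  fin_cases i <;> fin_cases j <;> simp [symplecticForm]

theorem det_I_smul_symplecticForm : (I • symplecticForm ℂ).det = -1 := by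
  simp [symplecticForm, det_fin_two]

theorem exists_conjTranspose_mul_diagonal_mul_eq_I_smul_symplecticForm {s : ℝ} (hs : s ≠ 0) :
    ∃ P : Matrix (Fin 2) (Fin 2) ℂ, IsUnit P.det ∧
      Pᴴ * diagonal ![(s : ℂ), -s] * P = I • symplecticForm ℂ := by
  have hs' : (s : ℂ) ≠ 0 := ofReal_ne_zero.2 hs
  -- the columns `(1, 1)` and `(I / 2s) • (1, -1)` are isotropic for `diag(s, -s)` and pair to `I`
  refine ⟨!![1, I / (2 * s); 1, -I / (2 * s)], ?_, ?_⟩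
  · rw [det_fin_two_of, isUnit_iff_ne_zero]
    field_simp
    norm_num [hs]
  · ext i j
    fin_cases i <;> fin_cases j <;>
      simp [symplecticForm, mul_apply, Fin.sum_univ_two, map_ofNat] <;> field_simp <;> ring

theorem IsHermitian.exists_conjTranspose_mul_mul_eq_model {H : Matrix (Fin 2) (Fin 2) ℂ}
    (hH : H.IsHermitian) (hdet : H.det ≠ 0) :
    ∃ S : Matrix (Fin 2) (Fin 2) ℂ, IsUnit S.det ∧
      (Sᴴ * H * S = 1 ∨ Sᴴ * H * S = -1 ∨ Sᴴ * H * S = I • symplecticForm ℂ) := by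
  obtain ⟨S, hS, ε, hε, hSHS⟩ := hH.exists_conjTranspose_mul_mul_eq_diagonal_sign hdet
  have hε0 : ε 0 ≠ 0 := by rcases hε 0 with h | h <;> norm_num [h]
  rcases (show ε 1 = ε 0 ∨ ε 1 = -ε 0 by
      rcases hε 0 with h0 | h0 <;> rcases hε 1 with h1 | h1 <;> norm_num [h0, h1]) with h | h
  · have hscalar : Sᴴ * H * S = (ε 0 : ℂ) • 1 := by
      rw [hSHS]
      ext i j
      fin_cases i <;> fin_cases j <;> simp [h]
    rcases hε 0 with h0 | h0 <;>
      simp only [h0, ofReal_neg, ofReal_one, neg_smul, one_smul] at hscalar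
    · exact ⟨S, hS, Or.inr (Or.inl hscalar)⟩
    · exact ⟨S, hS, Or.inl hscalar⟩
  · obtain ⟨P, hP, hPSP⟩ := exists_conjTranspose_mul_diagonal_mul_eq_I_smul_symplecticForm hε0
    refine ⟨S * P, by rw [det_mul]; exact hS.mul hP, Or.inr (Or.inr ?_)⟩
    calc (S * P)ᴴ * H * (S * P) = Pᴴ * (Sᴴ * H * S) * P := by
          simp only [conjTranspose_mul, Matrix.mul_assoc]
      _ = I • symplecticForm ℂ := by
          rw [hSHS, ← hPSP]
          congr 3
          funext i
          fin_cases i <;> simp [h]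

end Matrix

theorem isUnitarySubgroup_of_conj {G : Subgroup (SpecialLinearGroup (Fin 2) ℂ)}
    {T E : Matrix (Fin 2) (Fin 2) ℂ} (hT : IsUnit T.det) (hE : E.IsHermitian) (hEdet : E.det ≠ 0)
    (hG : ∀ g ∈ G, (T⁻¹ * (g : Matrix (Fin 2) (Fin 2) ℂ) * T)ᴴ * E *
      (T⁻¹ * (g : Matrix (Fin 2) (Fin 2) ℂ) * T) = E) :
    IsUnitarySubgroup G := by
  have hTinv : (T⁻¹).det ≠ 0 := (T.isUnit_nonsing_inv_det hT).ne_zero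
  refine ⟨(T⁻¹)ᴴ * E * T⁻¹, isHermitian_conjTranspose_mul_mul _ hE, ?_, fun g hg => ?_⟩
  · rw [det_mul, det_mul, det_conjTranspose]
    exact mul_ne_zero (mul_ne_zero (star_ne_zero.2 hTinv) hEdet) hTinv
  · have hcongr : Tᴴ * ((T⁻¹)ᴴ * E * T⁻¹) * T = E := by
      calc Tᴴ * ((T⁻¹)ᴴ * E * T⁻¹) * T = (T⁻¹ * T)ᴴ * E * (T⁻¹ * T) := by
            simp only [conjTranspose_mul, Matrix.mul_assoc]
        _ = E := by rw [nonsing_inv_mul T hT, conjTranspose_one, Matrix.one_mul, Matrix.mul_one]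
    exact (conjTranspose_mul_mul_eq_self_conj_iff hT hcongr _).1 (hG g hg)

theorem irreducible_unitary_iff_conj_model_general
    (G : Subgroup (Matrix.SpecialLinearGroup (Fin 2) ℂ)) :
    IsUnitarySubgroup G ↔
      ∃ T : Matrix (Fin 2) (Fin 2) ℂ, IsUnit T.det ∧
        ((∀ g ∈ G, ∀ i j, ((T⁻¹ * (g : Matrix (Fin 2) (Fin 2) ℂ) * T) i j).im = 0) ∨
         (∀ g ∈ G,
            (T⁻¹ * (g : Matrix (Fin 2) (Fin 2) ℂ) * T)ᴴ *
              (T⁻¹ * (g : Matrix (Fin 2) (Fin 2) ℂ) * T) = 1)) := by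
  constructor
  · rintro ⟨H, hH, hdet, hG⟩
    obtain ⟨T, hT, hE | hE | hE⟩ := hH.exists_conjTranspose_mul_mul_eq_model hdet
    · refine ⟨T, hT, Or.inr fun g hg => ?_⟩
      simpa using (conjTranspose_mul_mul_eq_self_conj_iff hT hE _).2 (hG g hg)
    · refine ⟨T, hT, Or.inr fun g hg => ?_⟩
      have h := (conjTranspose_mul_mul_eq_self_conj_iff hT hE _).2 (hG g hg)
      rw [← neg_one_smul ℂ 1, conjTranspose_mul_smul_mul_eq_smul_iff (by norm_num)] at h
      simpa using h
    · refine ⟨T, hT, Or.inl fun g hg => ?_⟩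
      have h := (conjTranspose_mul_mul_eq_self_conj_iff hT hE _).2 (hG g hg)
      rwa [conjTranspose_mul_smul_mul_eq_smul_iff I_ne_zero,
        conjTranspose_mul_symplecticForm_mul_eq_iff (det_inv_mul_coe_mul_eq_one hT g)] at h
  · rintro ⟨T, hT, hreal | hunitary⟩
    · refine isUnitarySubgroup_of_conj hT isHermitian_I_smul_symplecticForm
        (by rw [det_I_smul_symplecticForm]; norm_num) fun g hg => ?_
      rw [conjTranspose_mul_smul_mul_eq_smul_iff I_ne_zero,
        conjTranspose_mul_symplecticForm_mul_eq_iff (det_inv_mul_coe_mul_eq_one hT g)]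
      exact hreal g hg
    · exact isUnitarySubgroup_of_conj hT isHermitian_one (by simp) fun g hg => by
        simpa using hunitary g hg

/-- An irreducible subgroup of `SL(2,ℂ)` is unitary iff it is conjugate to a subgroup of
`SL(2,ℝ)` or to a subgroup of `SU(2)`. -/
theorem irreducible_unitary_iff_conj_model
    (G : Subgroup (Matrix.SpecialLinearGroup (Fin 2) ℂ))
    (hirr : IsIrreducibleSubgroup G) :
    IsUnitarySubgroup G ↔
      ∃ T : Matrix (Fin 2) (Fin 2) ℂ, IsUnit T.det ∧
        ((∀ g ∈ G, ∀ i j, ((T⁻¹ * (g : Matrix (Fin 2) (Fin 2) ℂ) * T) i j).im = 0) ∨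
         (∀ g ∈ G,
            (T⁻¹ * (g : Matrix (Fin 2) (Fin 2) ℂ) * T)ᴴ *
              (T⁻¹ * (g : Matrix (Fin 2) (Fin 2) ℂ) * T) = 1)) :=
  irreducible_unitary_iff_conj_model_general G
end

section
/- Suppose P, Q, R ∈ GL(2,ℂ) are reflections (each has eigenvalues 1 and −1; equivalently tr = 0 and det = −1), and their product M = P·Q·R is parabolic: there exists λ ∈ ℂ with |λ| = 1 such that tr(M) = 2λ, det(M) = λ², and M ≠ λ • 1 (M is not diagonalizable). Let G be the group generated by P, Q, and R. Then the following are equivalent: (1) G is unitary; (2) tr(P·Q), tr(Q·R), and tr(P·R) are all real; (3) t₁ = tr(P·Q) and t₂ = tr(Q·R) are real and satisfy (t₁² − 4)(t₂² − 4) ≥ 16. -/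
open Matrix Complex

/-!
Write `M = PQR`, `x = tr PQ`, `y = tr QR` and `z = tr PR`. Reflections are involutions, and
`det M = -1` forces `λ = ±i`. For traceless `2 × 2` matrices, `2 tr(ABC)²` is minus the Gram
determinant of `A, B, C` for the trace form, so `tr(M)² = -4` becomes `x² + y² + z² = xyz`.
As a quadratic in `z` with discriminant `(x² - 4)(y² - 4) - 16`, this gives (2) ⇔ (3).

If `gᴴ H g = H` then `conj (tr g) = tr g⁻¹`, which is `tr g` when `det g = 1`: (1) ⇒ (2).
Conversely, assume (2). Then `y ≠ 0`, for otherwise `x = z = 0`, so `P, Q, R` pairwise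
anticommute, `M² = -1` and `M` would be the scalar `λ`. With `N = M - λ` one has `N P N = y N`,
so for `v ≠ 0` in the image of `N` the vectors `v, Pv` form a basis in which `P = [[0,1],[1,0]]`
and `M = [[λ,y],[0,λ]]`; both preserve the Hermitian form `[[0,1],[1,0]]`. Writing
`R = [[r,s],[t,-r]]` in this basis, `tr MR = x`, `tr PR = z` and `tr Q = tr PMR = 0` say that
`t` and `s` are real and `r` is imaginary, which is exactly the condition for `R` to preserve it.
-/

namespace Beukers

section TwoByTwo

variable {K : Type*} [CommRing K]

theorem mul_self_eq_fin_two (A : Matrix (Fin 2) (Fin 2) K) :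
    A * A = A.trace • A - A.det • 1 := by
  ext i j
  fin_cases i <;> fin_cases j <;> simp [mul_apply, trace_fin_two, det_fin_two] <;> ring

theorem mul_self_eq_one_of_trace_eq_zero {A : Matrix (Fin 2) (Fin 2) K} (hA : A.trace = 0)
    (hdet : A.det = -1) : A * A = 1 := by
  rw [mul_self_eq_fin_two, hA, hdet]
  simp

theorem det_sub_smul_one_fin_two (A : Matrix (Fin 2) (Fin 2) K) (l : K) :
    (A - l • 1).det = l ^ 2 - A.trace * l + A.det := by
  simp [det_fin_two, trace_fin_two]
  ring

theorem eta_of_trace_eq_zero {A : Matrix (Fin 2) (Fin 2) K} (hA : A.trace = 0) :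
    A = !![A 0 0, A 0 1; A 1 0, -A 0 0] := by
  rw [trace_fin_two, add_eq_zero_iff_eq_neg'] at hA
  rw [← hA, ← eta_fin_two]

theorem mul_add_mul_eq_fin_two {A B : Matrix (Fin 2) (Fin 2) K} (hA : A.trace = 0)
    (hB : B.trace = 0) : A * B + B * A = (A * B).trace • 1 := by
  rw [eta_of_trace_eq_zero hA, eta_of_trace_eq_zero hB]
  ext i j
  fin_cases i <;> fin_cases j <;> simp [trace_fin_two] <;> ring

theorem mul_mul_eq_trace_smul {N : Matrix (Fin 2) (Fin 2) K} (hN : N.trace = 0)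
    (hN' : N.det = 0) (X : Matrix (Fin 2) (Fin 2) K) : N * X * N = (N * X).trace • N := by
  rw [eta_of_trace_eq_zero hN] at hN' ⊢
  rw [det_fin_two_of] at hN'
  rw [eta_fin_two X]
  ext i j
  fin_cases i <;> fin_cases j <;> simp [trace_fin_two]
  · linear_combination -(X 1 1) * hN'
  · linear_combination (X 0 1) * hN'
  · linear_combination (X 1 0) * hN'
  · linear_combination -(X 0 0) * hN'

theorem two_mul_sq_trace_mul_mul {A B C : Matrix (Fin 2) (Fin 2) K} (hA : A.trace = 0)
    (hB : B.trace = 0) (hC : C.trace = 0) :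
    2 * (A * B * C).trace ^ 2 =
      (A * B).trace ^ 2 * (C * C).trace + (B * C).trace ^ 2 * (A * A).trace
        + (A * C).trace ^ 2 * (B * B).trace
        - 2 * (A * B).trace * (B * C).trace * (A * C).trace
        - (A * A).trace * (B * B).trace * (C * C).trace := by
  rw [eta_of_trace_eq_zero hA, eta_of_trace_eq_zero hB, eta_of_trace_eq_zero hC]
  simp [trace_fin_two]
  ring

theorem mul_mul_mul_self_eq_neg_one {A B C : Matrix (Fin 2) (Fin 2) K} (hA : A * A = 1)
    (hB : B * B = 1) (hC : C * C = 1) (hAtr : A.trace = 0)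
    (hBtr : B.trace = 0) (hCtr : C.trace = 0) (hAB : (A * B).trace = 0) (hBC : (B * C).trace = 0)
    (hAC : (A * C).trace = 0) :
    A * B * C * (A * B * C) = -1 := by
  have anticomm : ∀ {X Y : Matrix (Fin 2) (Fin 2) K}, X.trace = 0 → Y.trace = 0 →
      (X * Y).trace = 0 → Y * X = -(X * Y) := fun hX hY hXY =>
    eq_neg_of_add_eq_zero_right (by rw [mul_add_mul_eq_fin_two hX hY, hXY, zero_smul])
  calc A * B * C * (A * B * C) = -(A * (B * A) * (C * B) * C) := by
        rw [show A * B * C * (A * B * C) = A * B * (C * A) * B * C by noncomm_ring,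
          anticomm hAtr hCtr hAC]
        noncomm_ring
    _ = -(A * A * (B * B) * (C * C)) := by
        rw [anticomm hAtr hBtr hAB, anticomm hBtr hCtr hBC]
        noncomm_ring
    _ = -1 := by rw [hA, hB, hC, one_mul, one_mul]

theorem trace_inv_eq_trace_of_det_eq_one {g : GL (Fin 2) K}
    (hg : (g : Matrix (Fin 2) (Fin 2) K).det = 1) :
    (↑g⁻¹ : Matrix (Fin 2) (Fin 2) K).trace = (g : Matrix (Fin 2) (Fin 2) K).trace := by
  rw [coe_units_inv, Matrix.inv_def, hg, Ring.inverse_one, one_smul, adjugate_fin_two,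
    trace_fin_two, trace_fin_two]
  simp [add_comm]

theorem mul_transpose_of_mulVec_eq {A : Matrix (Fin 2) (Fin 2) K} {v w : Fin 2 → K} {a b c d : K}
    (hv : A *ᵥ v = a • v + c • w) (hw : A *ᵥ w = b • v + d • w) :
    A * (of ![v, w])ᵀ = (of ![v, w])ᵀ * !![a, b; c, d] := by
  ext i j
  have hvi := congrFun hv i
  have hwi := congrFun hw i
  simp only [mulVec, dotProduct, Fin.sum_univ_two, Pi.add_apply, Pi.smul_apply, smul_eq_mul]
    at hvi hwi
  fin_cases j
  · simpa [mul_apply, Fin.sum_univ_two, mul_comm] using hvi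
  · simpa [mul_apply, Fin.sum_univ_two, mul_comm] using hwi

end TwoByTwo

section Reflections

variable {K : Type*} [Field K] [NeZero (2 : K)]

theorem sq_add_sq_add_sq_eq_mul_of_reflections {A B C : Matrix (Fin 2) (Fin 2) K} (hA : A * A = 1)
    (hB : B * B = 1) (hC : C * C = 1) (hAtr : A.trace = 0) (hBtr : B.trace = 0) (hCtr : C.trace = 0)
    (h : (A * B * C).trace ^ 2 = -4) :
    (A * B).trace ^ 2 + (B * C).trace ^ 2 + (A * C).trace ^ 2 =
      (A * B).trace * (B * C).trace * (A * C).trace := by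
  have key := two_mul_sq_trace_mul_mul hAtr hBtr hCtr
  rw [hA, hB, hC, h, trace_one, Fintype.card_fin] at key
  refine mul_left_cancel₀ (two_ne_zero : (2 : K) ≠ 0) ?_
  push_cast at key
  linear_combination -key

theorem eq_smul_one_of_mul_self_eq_neg_one {M : Matrix (Fin 2) (Fin 2) K} {l : K}
    (hl : l ^ 2 = -1) (hMtr : M.trace = 2 * l) (hMdet : M.det = l ^ 2) (hM : M * M = -1) :
    M = l • 1 := by
  have h := mul_self_eq_fin_two M
  rw [hM, hMtr, hMdet] at h
  have h2 : (2 : K) • (M - l • 1) = 0 := by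
    linear_combination (norm := module) l • h + hl • ((2 : K) • M - l • 1)
  exact sub_eq_zero.mp ((smul_eq_zero.mp h2).resolve_left two_ne_zero)

end Reflections

section NormalForm

variable {K : Type*} [Field K] {P M : Matrix (Fin 2) (Fin 2) K} {l : K}

theorem exists_eigenvector_linearIndependent_pair (hPtr : P.trace = 0) (hMtr : M.trace = 2 * l)
    (hMdet : M.det = l ^ 2) (hM : M ≠ l • 1) (hPM : (P * M).trace ≠ 0) :
    ∃ v : Fin 2 → K, LinearIndependent K ![v, P *ᵥ v] ∧ M *ᵥ v = l • v ∧
      M *ᵥ (P *ᵥ v) = (P * M).trace • v + l • P *ᵥ v := by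
  set N := M - l • 1 with hN
  have hNtr : N.trace = 0 := by simp [N, hMtr]; ring
  have hNdet : N.det = 0 := by rw [det_sub_smul_one_fin_two, hMtr, hMdet]; ring
  have hNN : N * N = 0 := by rw [mul_self_eq_fin_two, hNtr, hNdet]; simp
  have hNPN : N * P * N = (P * M).trace • N := by
    rw [mul_mul_eq_trace_smul hNtr hNdet, trace_mul_comm, hN, mul_sub, trace_sub,
      Matrix.mul_smul, trace_smul, mul_one, hPtr, smul_zero, sub_zero]
  obtain ⟨u, hu⟩ : ∃ u, N *ᵥ u ≠ 0 := by
    by_contra! h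
    exact hM (sub_eq_zero.mp (ext_iff_mulVec.2 fun v => by rw [h, zero_mulVec]))
  have hMx : ∀ x, M *ᵥ x = N *ᵥ x + l • x := fun x => by
    rw [hN, sub_mulVec, smul_mulVec, one_mulVec, sub_add_cancel]
  have hNv : N *ᵥ (N *ᵥ u) = 0 := by rw [mulVec_mulVec, hNN, zero_mulVec]
  have hNPv : N *ᵥ (P *ᵥ (N *ᵥ u)) = (P * M).trace • N *ᵥ u := by
    rw [mulVec_mulVec, mulVec_mulVec, hNPN, smul_mulVec]
  refine ⟨N *ᵥ u, LinearIndependent.pair_iff.2 fun s t hst => ?_, ?_, ?_⟩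
  · have ht : t = 0 := by
      have := congrArg (N *ᵥ ·) hst
      simp only [mulVec_add, mulVec_smul, hNv, hNPv, smul_zero, zero_add, mulVec_zero,
        smul_smul] at this
      exact (mul_eq_zero.mp ((smul_eq_zero.mp this).resolve_right hu)).resolve_right hPM
    rw [ht, zero_smul, add_zero] at hst
    exact ⟨(smul_eq_zero.mp hst).resolve_right hu, ht⟩
  · rw [hMx, hNv, zero_add]
  · rw [hMx, hNPv]

theorem exists_conj_swap_jordan (hP : P * P = 1) (hPtr : P.trace = 0) (hMtr : M.trace = 2 * l)
    (hMdet : M.det = l ^ 2) (hM : M ≠ l • 1) (hPM : (P * M).trace ≠ 0) :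
    ∃ T : GL (Fin 2) K,
      P * (T : Matrix (Fin 2) (Fin 2) K) = (T : Matrix (Fin 2) (Fin 2) K) * !![0, 1; 1, 0] ∧
        M * (T : Matrix (Fin 2) (Fin 2) K) =
          (T : Matrix (Fin 2) (Fin 2) K) * !![l, (P * M).trace; 0, l] := by
  obtain ⟨v, hind, hMv, hMPv⟩ :=
    exists_eigenvector_linearIndependent_pair hPtr hMtr hMdet hM hPM
  have hT : IsUnit (of ![v, P *ᵥ v])ᵀ := linearIndependent_cols_iff_isUnit.1 hind
  refine ⟨hT.unit, mul_transpose_of_mulVec_eq ?_ ?_, mul_transpose_of_mulVec_eq ?_ ?_⟩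
  · rw [zero_smul, one_smul, zero_add]
  · rw [mulVec_mulVec, hP, one_mulVec, one_smul, zero_smul, add_zero]
  · rw [hMv, zero_smul, add_zero]
  · exact hMPv

end NormalForm

section FormStabilizer

variable {n K : Type*} [Fintype n] [DecidableEq n] [CommRing K] [StarRing K]

def formStabilizer (H : Matrix n n K) : Subgroup (GL n K) where
  carrier := {g | (g : Matrix n n K)ᴴ * H * g = H}
  one_mem' := by simp
  mul_mem' {g h} hg hh := by
    simp only [Set.mem_ofPred_eq, Units.val_mul, conjTranspose_mul] at *
    calc (h : Matrix n n K)ᴴ * (g : Matrix n n K)ᴴ * H * (g * h)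
        = (h : Matrix n n K)ᴴ * ((g : Matrix n n K)ᴴ * H * g) * h := by simp only [mul_assoc]
      _ = H := by rw [hg, hh]
  inv_mem' {g} hg := by
    simp only [Set.mem_ofPred_eq] at *
    set g' : Matrix n n K := ↑g⁻¹
    calc g'ᴴ * H * g' = g'ᴴ * ((g : Matrix n n K)ᴴ * H * g) * g' := by rw [hg]
      _ = ((g : Matrix n n K) * g')ᴴ * H * (g * g') := by simp only [conjTranspose_mul, mul_assoc]
      _ = H := by simp [g']

theorem mem_formStabilizer {H : Matrix n n K} {g : GL n K} :
    g ∈ formStabilizer H ↔ (g : Matrix n n K)ᴴ * H * g = H := Iff.rfl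

theorem mem_formStabilizer_of_mul_eq_mul {T g : GL n K} {X H : Matrix n n K}
    (hX : (g : Matrix n n K) * T = T * X) (hXH : Xᴴ * H * X = H) :
    g ∈ formStabilizer ((↑T⁻¹ : Matrix n n K)ᴴ * H * (↑T⁻¹ : Matrix n n K)) := by
  set T' : Matrix n n K := ↑T⁻¹
  have hg : (g : Matrix n n K) = T * X * T' := by rw [← hX, mul_assoc, T.mul_inv, mul_one]
  have hT : (T : Matrix n n K)ᴴ * T'ᴴ = 1 := by
    rw [← conjTranspose_mul, T.inv_mul, conjTranspose_one]
  rw [mem_formStabilizer, hg]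
  calc (T * X * T' : Matrix n n K)ᴴ * (T'ᴴ * H * T') * (T * X * T')
      = T'ᴴ * Xᴴ * ((T : Matrix n n K)ᴴ * T'ᴴ) * H * (T' * T) * X * T' := by
        simp only [conjTranspose_mul, mul_assoc]
    _ = T'ᴴ * (Xᴴ * H * X) * T' := by rw [hT, T.inv_mul]; simp only [mul_one, mul_assoc]
    _ = T'ᴴ * H * T' := by rw [hXH]

theorem star_trace_eq_trace_inv {H : Matrix n n K} (hH : IsUnit H.det) {g : GL n K}
    (hg : g ∈ formStabilizer H) :
    star (g : Matrix n n K).trace = (↑g⁻¹ : Matrix n n K).trace := by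
  set g' : Matrix n n K := ↑g⁻¹
  have hgH : (g : Matrix n n K)ᴴ = H * g' * H⁻¹ := by
    calc (g : Matrix n n K)ᴴ = (g : Matrix n n K)ᴴ * H * (g * g') * H⁻¹ := by
          rw [g.mul_inv, mul_one, mul_assoc, mul_nonsing_inv _ hH, mul_one]
      _ = H * g' * H⁻¹ := by rw [← mul_assoc _ (g : Matrix n n K), hg]
  rw [← trace_conjTranspose, hgH, trace_mul_cycle, nonsing_inv_mul _ hH, one_mul]

end FormStabilizer

section NormalFrame

variable {K : Type*} [CommRing K] [StarRing K]

theorem swap_preserves_swap :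
    (!![0, 1; 1, 0] : Matrix (Fin 2) (Fin 2) K)ᴴ * !![0, 1; 1, 0] * !![0, 1; 1, 0] =
      !![0, 1; 1, 0] := by
  ext i j; fin_cases i <;> fin_cases j <;> simp [conjTranspose_apply, mul_apply]

theorem jordan_preserves_swap {l y : K} (hl : star l * l = 1)
    (hy : star l * y + star y * l = 0) :
    (!![l, y; 0, l])ᴴ * !![0, 1; 1, 0] * !![l, y; 0, l] = !![0, 1; 1, 0] := by
  ext i j; fin_cases i <;> fin_cases j <;> simp [conjTranspose_apply, mul_apply, hl, hy]

end NormalFrame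

theorem preserves_swap_of_traces {K : Type*} [Field K] [StarRing K] {l y : K}
    (hl : star l = -l) (hy : star y = y) (hy0 : y ≠ 0) {X : Matrix (Fin 2) (Fin 2) K}
    (htr : X.trace = 0) (hdet : X.det = -1)
    (hSX : star (!![0, 1; 1, 0] * X).trace = (!![0, 1; 1, 0] * X).trace)
    (hJX : star (!![l, y; 0, l] * X).trace = (!![l, y; 0, l] * X).trace)
    (hSJX : (!![0, 1; 1, 0] * !![l, y; 0, l] * X).trace = 0) :
    Xᴴ * !![0, 1; 1, 0] * X = !![0, 1; 1, 0] := by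
  rw [eta_of_trace_eq_zero htr] at hdet hSX hJX hSJX ⊢
  set a := X 0 0
  set b := X 0 1
  set c := X 1 0
  have tSX : (!![0, 1; 1, 0] * !![a, b; c, -a]).trace = c + b := by simp [trace_fin_two]
  have tJX : (!![l, y; 0, l] * !![a, b; c, -a]).trace = y * c := by simp [trace_fin_two]
  have tSJX : (!![0, 1; 1, 0] * !![l, y; 0, l] * !![a, b; c, -a]).trace = l * (b + c) - y * a := by
    simp [trace_fin_two]; ring
  rw [det_fin_two_of] at hdet
  rw [tSX] at hSX
  rw [tJX] at hJX
  rw [tSJX] at hSJX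
  have hc : star c = c := by
    rw [star_mul', hy] at hJX
    exact mul_left_cancel₀ hy0 hJX
  have hb : star b = b := by rw [star_add, hc] at hSX; exact add_left_cancel hSX
  have ha : star a = -a := by
    refine mul_left_cancel₀ hy0 ?_
    have h' := congrArg star (sub_eq_zero.mp hSJX)
    rw [star_mul', star_mul', hy, hl, star_add, hb, hc] at h'
    linear_combination -h' - hSJX
  ext i j
  fin_cases i <;> fin_cases j <;> simp [conjTranspose_apply, mul_apply, ha, hb, hc]
  · ring
  · linear_combination -hdet
  · linear_combination -hdet
  · ring

section Complex

local notation "𝕄" => Matrix (Fin 2) (Fin 2) ℂ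

theorem isUnitaryMatrixGroup_iff (G : Subgroup (GL (Fin 2) ℂ)) :
    IsUnitaryMatrixGroup {m | ∃ g ∈ G, (g : 𝕄) = m} ↔
      ∃ H : 𝕄, H.IsHermitian ∧ H.det ≠ 0 ∧ G ≤ formStabilizer H := by
  simp only [IsUnitaryMatrixGroup, Set.mem_ofPred_eq, forall_exists_index, and_imp,
    forall_apply_eq_imp_iff₂]
  rfl

theorem im_trace_eq_zero_of_mem_formStabilizer {H : 𝕄} (hH : H.det ≠ 0)
    {g : GL (Fin 2) ℂ} (hg : g ∈ formStabilizer H)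
    (hdet : (g : 𝕄).det = 1) : (g : 𝕄).trace.im = 0 :=
  conj_eq_iff_im.mp <| (star_trace_eq_trace_inv hH.isUnit hg).trans
    (trace_inv_eq_trace_of_det_eq_one hdet)

theorem star_eq_neg_of_sq_eq_neg_one {l : ℂ} (hl : l ^ 2 = -1) : star l = -l := by
  rcases sq_eq_sq_iff_eq_or_eq_neg.1 (hl.trans I_sq.symm) with rfl | rfl <;> simp

theorem exists_invariant_form_of_real_traces {P M R : GL (Fin 2) ℂ} (hP : (P : 𝕄) * P = 1)
    (hPtr : (P : 𝕄).trace = 0) (hRtr : (R : 𝕄).trace = 0) (hRdet : (R : 𝕄).det = -1) {l : ℂ}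
    (hl : l ^ 2 = -1) (hMtr : (M : 𝕄).trace = 2 * l) (hMdet : (M : 𝕄).det = l ^ 2)
    (hM : (M : 𝕄) ≠ l • 1) (hPM : ((P : 𝕄) * M).trace ≠ 0) (hPMim : ((P : 𝕄) * M).trace.im = 0)
    (hMRim : ((M : 𝕄) * R).trace.im = 0) (hPRim : ((P : 𝕄) * R).trace.im = 0)
    (hPMR : ((P : 𝕄) * M * R).trace = 0) :
    ∃ H : 𝕄, H.IsHermitian ∧ H.det ≠ 0 ∧
      P ∈ formStabilizer H ∧ M ∈ formStabilizer H ∧ R ∈ formStabilizer H := by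
  obtain ⟨T, hPT, hMT⟩ := exists_conj_swap_jordan hP hPtr hMtr hMdet hM hPM
  set X : 𝕄 := (↑T⁻¹ : 𝕄) * R * T with hXdef
  have hRT : (R : 𝕄) * T = T * X := by
    rw [hXdef, ← mul_assoc, ← mul_assoc, T.mul_inv, one_mul]
  have trace_eq {A A' : 𝕄} (h : A * T = T * A') : A'.trace = A.trace := by
    have hA' : A' = (↑T⁻¹ : 𝕄) * A * T := by
      rw [mul_assoc, h, ← mul_assoc, T.inv_mul, one_mul]
    rw [hA', trace_units_conj']
  have mul_eq {A A' B B' : 𝕄} (hA : A * T = T * A')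
      (hB : B * T = T * B') : A * B * T = T * (A' * B') := by
    rw [mul_assoc, hB, ← mul_assoc, hA, mul_assoc]
  have hl' : star l = -l := star_eq_neg_of_sq_eq_neg_one hl
  have hy : star ((P : 𝕄) * M).trace = ((P : 𝕄) * M).trace := conj_eq_iff_im.2 hPMim
  have hX : Xᴴ * !![0, 1; 1, 0] * X = !![0, 1; 1, 0] := by
    refine preserves_swap_of_traces hl' hy hPM ?_ ?_ ?_ ?_ ?_
    · rw [trace_eq hRT, hRtr]
    · rw [hXdef, det_units_conj', hRdet]
    · rw [trace_eq (mul_eq hPT hRT)]; exact conj_eq_iff_im.2 hPRim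
    · rw [trace_eq (mul_eq hMT hRT)]; exact conj_eq_iff_im.2 hMRim
    · rw [trace_eq (mul_eq (mul_eq hPT hMT) hRT), hPMR]
  refine ⟨(↑T⁻¹ : 𝕄)ᴴ * !![0, 1; 1, 0] * (↑T⁻¹ : 𝕄),
    isHermitian_conjTranspose_mul_mul _ ?_, ?_, mem_formStabilizer_of_mul_eq_mul hPT
      swap_preserves_swap, mem_formStabilizer_of_mul_eq_mul hMT ?_,
      mem_formStabilizer_of_mul_eq_mul hRT hX⟩
  · ext i j; fin_cases i <;> fin_cases j <;> simp
  · simpa [det_conjTranspose, det_fin_two_of] using (isUnits_det_units T).ne_zero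
  · refine jordan_preserves_swap (by rw [hl']; linear_combination -hl) ?_
    rw [hl', hy]
    ring

theorem eq_zero_of_sq_add_sq_eq_zero {x z : ℂ} (hx : x.im = 0) (hz : z.im = 0)
    (h : x ^ 2 + z ^ 2 = 0) : x = 0 ∧ z = 0 := by
  obtain ⟨a, rfl⟩ := conj_eq_iff_real.1 (conj_eq_iff_im.2 hx)
  obtain ⟨c, rfl⟩ := conj_eq_iff_real.1 (conj_eq_iff_im.2 hz)
  have hac : a ^ 2 + c ^ 2 = 0 := by exact_mod_cast h
  constructor <;> simp <;> nlinarith [sq_nonneg a, sq_nonneg c]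

theorem exists_invariant_form_of_reflections {P Q R : GL (Fin 2) ℂ} (hPtr : (P : 𝕄).trace = 0)
    (hPdet : (P : 𝕄).det = -1) (hQtr : (Q : 𝕄).trace = 0) (hQdet : (Q : 𝕄).det = -1)
    (hRtr : (R : 𝕄).trace = 0) (hRdet : (R : 𝕄).det = -1) {l : ℂ} (hl : l ^ 2 = -1)
    (hMtr : ((P : 𝕄) * Q * R).trace = 2 * l) (hMdet : ((P : 𝕄) * Q * R).det = l ^ 2)
    (hM : (P : 𝕄) * Q * R ≠ l • 1)
    (hmarkov : ((P : 𝕄) * Q).trace ^ 2 + ((Q : 𝕄) * R).trace ^ 2 + ((P : 𝕄) * R).trace ^ 2 =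
      ((P : 𝕄) * Q).trace * ((Q : 𝕄) * R).trace * ((P : 𝕄) * R).trace)
    (hx : ((P : 𝕄) * Q).trace.im = 0) (hy : ((Q : 𝕄) * R).trace.im = 0)
    (hz : ((P : 𝕄) * R).trace.im = 0) :
    ∃ H : 𝕄, H.IsHermitian ∧ H.det ≠ 0 ∧
      P ∈ formStabilizer H ∧ Q ∈ formStabilizer H ∧ R ∈ formStabilizer H := by
  have hP := mul_self_eq_one_of_trace_eq_zero hPtr hPdet
  have hQ := mul_self_eq_one_of_trace_eq_zero hQtr hQdet
  have hR := mul_self_eq_one_of_trace_eq_zero hRtr hRdet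
  have hy0 : ((Q : 𝕄) * R).trace ≠ 0 := by
    intro hy0
    obtain ⟨hx0, hz0⟩ := eq_zero_of_sq_add_sq_eq_zero hx hz (by
      rw [hy0] at hmarkov; linear_combination hmarkov)
    exact hM (eq_smul_one_of_mul_self_eq_neg_one hl hMtr hMdet
      (mul_mul_mul_self_eq_neg_one hP hQ hR hPtr hQtr hRtr hx0 hy0 hz0))
  have hPM : (P : 𝕄) * (P * Q * R) = Q * R := by
    rw [← mul_assoc, ← mul_assoc, hP, one_mul]
  have hMR : (P : 𝕄) * Q * R * R = P * Q := by
    rw [mul_assoc _ (R : 𝕄), hR, mul_one]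
  obtain ⟨H, hH, hHdet, hPH, hMH, hRH⟩ := exists_invariant_form_of_real_traces (M := P * Q * R)
    hP hPtr hRtr hRdet hl hMtr hMdet hM (by rwa [Units.val_mul, Units.val_mul, hPM])
    (by rwa [Units.val_mul, Units.val_mul, hPM]) (by rwa [Units.val_mul, Units.val_mul, hMR])
    hz (by rw [Units.val_mul, Units.val_mul, hPM, mul_assoc, hR, mul_one, hQtr])
  refine ⟨H, hH, hHdet, hPH, ?_, hRH⟩
  rw [show Q = P⁻¹ * (P * Q * R) * R⁻¹ by group]
  exact mul_mem (mul_mem (inv_mem hPH) hMH) (inv_mem hRH)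

theorem sixteen_le_of_sq_add_sq_add_sq_eq_mul {a b c : ℝ}
    (h : a ^ 2 + b ^ 2 + c ^ 2 = a * b * c) :
    16 ≤ (a ^ 2 - 4) * (b ^ 2 - 4) := by
  nlinarith [sq_nonneg (a * b - 2 * c)]

theorem im_eq_zero_of_sq_add_sq_add_sq_eq_mul {a b : ℝ} {z : ℂ}
    (h : (a : ℂ) ^ 2 + (b : ℂ) ^ 2 + z ^ 2 = a * b * z)
    (hab : 16 ≤ (a ^ 2 - 4) * (b ^ 2 - 4)) : z.im = 0 := by
  set s := √((a ^ 2 - 4) * (b ^ 2 - 4) - 16)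
  have hs : s * s = (a ^ 2 - 4) * (b ^ 2 - 4) - 16 := Real.mul_self_sqrt (by linarith)
  have hdisc : discrim (1 : ℂ) (-(a * b)) (a ^ 2 + b ^ 2) = s * s := by
    rw [discrim, ← ofReal_mul s s, hs]
    push_cast
    ring
  rcases (quadratic_eq_zero_iff one_ne_zero hdisc z).1 (by linear_combination h) with hz | hz
  · rw [hz, show (-(-(a * b : ℂ)) + s) / (2 * 1) = ((a * b + s) / 2 : ℝ) by push_cast; ring]
    exact ofReal_im _
  · rw [hz, show (-(-(a * b : ℂ)) - s) / (2 * 1) = ((a * b - s) / 2 : ℝ) by push_cast; ring]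
    exact ofReal_im _

theorem im_eq_zero_iff_of_sq_add_sq_add_sq_eq_mul {x y z : ℂ}
    (h : x ^ 2 + y ^ 2 + z ^ 2 = x * y * z) :
    (x.im = 0 ∧ y.im = 0 ∧ z.im = 0) ↔
      ∃ t₁ t₂ : ℝ, x = t₁ ∧ y = t₂ ∧ (t₁ ^ 2 - 4) * (t₂ ^ 2 - 4) ≥ 16 := by
  constructor
  · rintro ⟨hx, hy, hz⟩
    have real (w : ℂ) (hw : w.im = 0) : w = (w.re : ℂ) := ext (by simp) (by simp [hw])
    rw [real x hx, real y hy, real z hz] at h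
    exact ⟨x.re, y.re, real x hx, real y hy,
      sixteen_le_of_sq_add_sq_add_sq_eq_mul (by exact_mod_cast h)⟩
  · rintro ⟨t₁, t₂, rfl, rfl, h16⟩
    exact ⟨ofReal_im _, ofReal_im _, im_eq_zero_of_sq_add_sq_add_sq_eq_mul h h16⟩

end Complex

end Beukers

open Beukers

/-- Beukers' criterion: for three reflections `P, Q, R` whose product is parabolic, the group
they generate is unitary iff `tr(PQ)`, `tr(QR)`, `tr(PR)` are real, iff `t₁ = tr(PQ)` and
`t₂ = tr(QR)` are real and `(t₁² - 4)(t₂² - 4) ≥ 16`. -/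
theorem beukers_reflection_criterion (P Q R : GL (Fin 2) ℂ)
    (hPrefl : Matrix.trace (P : Matrix (Fin 2) (Fin 2) ℂ) = 0 ∧
      ((P : Matrix (Fin 2) (Fin 2) ℂ)).det = -1)
    (hQrefl : Matrix.trace (Q : Matrix (Fin 2) (Fin 2) ℂ) = 0 ∧
      ((Q : Matrix (Fin 2) (Fin 2) ℂ)).det = -1)
    (hRrefl : Matrix.trace (R : Matrix (Fin 2) (Fin 2) ℂ) = 0 ∧
      ((R : Matrix (Fin 2) (Fin 2) ℂ)).det = -1)
    (hpar : ∃ l : ℂ, ‖l‖ = 1 ∧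
      Matrix.trace ((P * Q * R : GL (Fin 2) ℂ) : Matrix (Fin 2) (Fin 2) ℂ) = 2 * l ∧
      (((P * Q * R : GL (Fin 2) ℂ) : Matrix (Fin 2) (Fin 2) ℂ)).det = l ^ 2 ∧
      ((P * Q * R : GL (Fin 2) ℂ) : Matrix (Fin 2) (Fin 2) ℂ) ≠ l • (1 : Matrix (Fin 2) (Fin 2) ℂ))
    (G : Subgroup (GL (Fin 2) ℂ)) (hG : G = Subgroup.closure {P, Q, R}) :
    (IsUnitaryMatrixGroup {m : Matrix (Fin 2) (Fin 2) ℂ | ∃ g ∈ G, (g : Matrix (Fin 2) (Fin 2) ℂ) = m} ↔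
      ((Matrix.trace ((P * Q : GL (Fin 2) ℂ) : Matrix (Fin 2) (Fin 2) ℂ)).im = 0 ∧
       (Matrix.trace ((Q * R : GL (Fin 2) ℂ) : Matrix (Fin 2) (Fin 2) ℂ)).im = 0 ∧
       (Matrix.trace ((P * R : GL (Fin 2) ℂ) : Matrix (Fin 2) (Fin 2) ℂ)).im = 0)) ∧
    (IsUnitaryMatrixGroup {m : Matrix (Fin 2) (Fin 2) ℂ | ∃ g ∈ G, (g : Matrix (Fin 2) (Fin 2) ℂ) = m} ↔
      ∃ t₁ t₂ : ℝ,
        Matrix.trace ((P * Q : GL (Fin 2) ℂ) : Matrix (Fin 2) (Fin 2) ℂ) = (t₁ : ℂ) ∧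
        Matrix.trace ((Q * R : GL (Fin 2) ℂ) : Matrix (Fin 2) (Fin 2) ℂ) = (t₂ : ℂ) ∧
        (t₁ ^ 2 - 4) * (t₂ ^ 2 - 4) ≥ 16) := by
  obtain ⟨hPtr, hPdet⟩ := hPrefl
  obtain ⟨hQtr, hQdet⟩ := hQrefl
  obtain ⟨hRtr, hRdet⟩ := hRrefl
  obtain ⟨l, -, hMtr, hMdet, hM⟩ := hpar
  simp only [Units.val_mul] at hMtr hMdet hM ⊢
  have hl : l ^ 2 = -1 := by rw [← hMdet, det_mul, det_mul, hPdet, hQdet, hRdet]; norm_num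
  have hmarkov := sq_add_sq_add_sq_eq_mul_of_reflections
    (mul_self_eq_one_of_trace_eq_zero hPtr hPdet) (mul_self_eq_one_of_trace_eq_zero hQtr hQdet)
    (mul_self_eq_one_of_trace_eq_zero hRtr hRdet) hPtr hQtr hRtr
    (by rw [hMtr]; linear_combination 4 * hl)
  rw [← im_eq_zero_iff_of_sq_add_sq_add_sq_eq_mul hmarkov, and_self, isUnitaryMatrixGroup_iff, hG]
  simp only [Subgroup.closure_le, Set.insert_subset_iff, Set.singleton_subset_iff, SetLike.mem_coe]
  constructor
  · rintro ⟨H, -, hH, hPH, hQH, hRH⟩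
    have hdet (A B : Matrix (Fin 2) (Fin 2) ℂ) (hA : A.det = -1) (hB : B.det = -1) :
        (A * B).det = 1 := by rw [det_mul, hA, hB]; norm_num
    exact ⟨im_trace_eq_zero_of_mem_formStabilizer hH (mul_mem hPH hQH) (hdet _ _ hPdet hQdet),
      im_trace_eq_zero_of_mem_formStabilizer hH (mul_mem hQH hRH) (hdet _ _ hQdet hRdet),
      im_trace_eq_zero_of_mem_formStabilizer hH (mul_mem hPH hRH) (hdet _ _ hPdet hRdet)⟩
  · rintro ⟨hx, hy, hz⟩
    exact exists_invariant_form_of_reflections hPtr hPdet hQtr hQdet hRtr hRdet hl hMtr hMdet hM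
      hmarkov hx hy hz
end

section
/- There do not exist matrices Q, R ∈ SL(2,ℂ) such that, with P = !![1, 1; 0, 1], one has tr(Q) = tr(R) = 2, tr(P·Q) = tr(P·R) = tr(Q·R) = −2, and tr(P·Q·R) = 2. -/
open Matrix Complex

/-- The impossibility established in the proof of the irreducible-case unitarity criterion:
with `P = !![1, 1; 0, 1]`, there are no `Q, R ∈ SL(2,ℂ)` with `tr Q = tr R = 2`,
`tr(PQ) = tr(PR) = tr(QR) = -2`, and `tr(PQR) = 2`. -/
theorem no_QR_with_given_traces :
    ¬ ∃ Q R : Matrix (Fin 2) (Fin 2) ℂ, Q.det = 1 ∧ R.det = 1 ∧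
      Matrix.trace Q = 2 ∧ Matrix.trace R = 2 ∧
      Matrix.trace (!![1, 1; 0, 1] * Q) = -2 ∧
      Matrix.trace (!![1, 1; 0, 1] * R) = -2 ∧
      Matrix.trace (Q * R) = -2 ∧
      Matrix.trace (!![1, 1; 0, 1] * Q * R) = 2 := by
  rintro ⟨Q, R, hdQ, hdR, htQ, htR, h1, h2, h3, h4⟩
  obtain ⟨a, b, c, d, rfl⟩ : ∃ a b c d, Q = !![a, b; c, d] :=
    ⟨_, _, _, _, Matrix.eta_fin_two Q⟩
  obtain ⟨e, f, g, h, rfl⟩ : ∃ e f g h, R = !![e, f; g, h] :=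
    ⟨_, _, _, _, Matrix.eta_fin_two R⟩
  simp only [Matrix.mul_fin_two, Matrix.det_fin_two_of, Matrix.trace_fin_two_of,
    one_mul, zero_mul, add_zero, zero_add] at hdQ hdR htQ htR h1 h2 h3 h4
  have hc : c = -4 := by linear_combination h1 - htQ
  have hg : g = -4 := by linear_combination h2 - htR
  have hde : d + e = -1 := by
    linear_combination (-1/4 : ℂ) * (h4 - h3 - e * hc - d * hg)
  have hah : a + h = 5 := by linear_combination htQ + htR - hde
  have : (5 : ℂ) = 0 := by
    linear_combination -(h3 + hdQ + hdR - b * hg + b * hc - f * hc + f * hg)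
      + (a + h) * hde - hah
  norm_num at this
end
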